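/- arXiv:0910.4889 — 3 statements merged into one kernel-verified Lean document; each statement's English description precedes it below -/
import Mathlib

section
/- Let G be a 2-connected finite simple graph with path-width at most 2 and let C be a longest cycle of G. Then every bridge of C is trivial, that is, it is either a single edge joining two vertices of C, or a path of length two between two vertices of C whose middle vertex does not lie on C. -/
/-!
Let `N` be a component of `G - V(C)`. As `G` is 2-connected, `N` has at least two legs. Three
legs would cut `C` into three arcs forming, together with `N`, a `K₄` minor. The bags meeting a
connected vertex set form an interval, and pairwise intersecting intervals share a point, so
some bag meets all four branch sets: impossible in width 2. Hence the legs are two vertices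
`a, b`. If `N` had two vertices, 2-connectivity would give an `a`-`b` path of length at least 3
through `N`; since `C` is longest, both arcs of `C` from `a` to `b` are at least as long, and
three internally disjoint `a`-`b` paths of length at least 3 again force a bag of size 4: some
bag contains the second edge (the rung) of each path, and the middle one of these three bags
also meets the two disjoint walks joining the other two rungs, one through `a` and one through
`b`. So `N` is a single vertex whose only neighbours are `a` and `b`.
-/

open SimpleGraph

universe u v

/-- A path-decomposition of a simple graph: a finite sequence of bags covering all vertices
and edges, such that bags containing a fixed vertex occur consecutively. -/
structure PathDecomp {V : Type u} (G : SimpleGraph V) where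
  n : ℕ
  bag : Fin n → Finset V
  mem_bag : ∀ v : V, ∃ i, v ∈ bag i
  edge_bag : ∀ ⦃u w : V⦄, G.Adj u w → ∃ i, u ∈ bag i ∧ w ∈ bag i
  interp : ∀ i j k : Fin n, i ≤ j → j ≤ k → ∀ v : V, v ∈ bag i → v ∈ bag k → v ∈ bag j

/-- The width of a path-decomposition: (maximal bag size) - 1. -/
def PathDecomp.width {V : Type u} {G : SimpleGraph V} (D : PathDecomp G) : ℕ :=
  (Finset.univ.sup fun i => (D.bag i).card) - 1

/-- The path-width of a graph: the minimum width of a path-decomposition. -/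
noncomputable def pathWidth {V : Type u} (G : SimpleGraph V) : ℕ :=
  sInf {w | ∃ D : PathDecomp G, D.width = w}

/-- `IsMinor G H` : `H` is a minor of `G`, witnessed by a family of pairwise disjoint nonempty
connected branch sets in `G` indexed by the vertices of `H`. -/
def IsMinor {V : Type u} {W : Type v} (G : SimpleGraph V) (H : SimpleGraph W) : Prop :=
  ∃ B : W → Set V,
    (∀ w, (B w).Nonempty) ∧
    (Pairwise fun w w' => Disjoint (B w) (B w')) ∧
    (∀ w, (G.induce (B w)).Connected) ∧
    (∀ ⦃w w'⦄, H.Adj w w' → ∃ u ∈ B w, ∃ u' ∈ B w', G.Adj u u')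

/-- A graph is 2-connected if it has at least 3 vertices and deleting any vertex leaves it
connected. -/
def TwoConnected {V : Type u} (G : SimpleGraph V) : Prop :=
  3 ≤ Nat.card V ∧ ∀ v : V, (G.induce ({v}ᶜ : Set V)).Connected

/-- A graph is 2-edge-connected if it is connected, has at least 2 vertices, and deleting any
edge leaves it connected. -/
def TwoEdgeConnected {V : Type u} (G : SimpleGraph V) : Prop :=
  G.Connected ∧ 2 ≤ Nat.card V ∧ ∀ e ∈ G.edgeSet, (G.deleteEdges {e}).Connected

/-- A track representation of a graph `G`: two disjoint paths `p 0, …, p (k-1)` and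
`q 0, …, q (l-1)`, short chords (edges `p i — q j`) and long chords (paths `p i — m — q j`
with middle vertex `m ∈ M`, recorded by `ends m = (i, j)`), the chords pairwise non-crossing,
with a chord joining the first vertices of the two paths and a chord joining the last ones;
the vertices of `G` are exactly those of the two paths plus the middle vertices, and the
edges of `G` are exactly the path edges and the chord edges. -/
structure TrackRep {V : Type u} (G : SimpleGraph V) where
  k : ℕ
  l : ℕ
  kpos : 0 < k
  lpos : 0 < l
  p : Fin k → V
  q : Fin l → V
  short : Set (Fin k × Fin l)
  M : Set V
  ends : V → Fin k × Fin l
  M_fin : M.Finite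
  p_inj : Function.Injective p
  q_inj : Function.Injective q
  p_ne_q : ∀ i j, p i ≠ q j
  M_ne_p : ∀ ⦃m⦄, m ∈ M → ∀ i, m ≠ p i
  M_ne_q : ∀ ⦃m⦄, m ∈ M → ∀ j, m ≠ q j
  vert_cover : ∀ x : V, (∃ i, x = p i) ∨ (∃ j, x = q j) ∨ x ∈ M
  noncross : ∀ c ∈ short ∪ ends '' M, ∀ c' ∈ short ∪ ends '' M,
      0 ≤ (((c.1 : ℕ) : ℤ) - ((c'.1 : ℕ) : ℤ)) * (((c.2 : ℕ) : ℤ) - ((c'.2 : ℕ) : ℤ))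
  first_chord : (⟨0, kpos⟩, ⟨0, lpos⟩) ∈ short ∪ ends '' M
  last_chord : (⟨k - 1, Nat.sub_lt kpos Nat.one_pos⟩, ⟨l - 1, Nat.sub_lt lpos Nat.one_pos⟩)
      ∈ short ∪ ends '' M
  adj_iff : ∀ u w : V, G.Adj u w ↔
      (∃ i j : Fin k, ((i : ℕ) + 1 = (j : ℕ) ∨ (j : ℕ) + 1 = (i : ℕ)) ∧ u = p i ∧ w = p j) ∨
      (∃ i j : Fin l, ((i : ℕ) + 1 = (j : ℕ) ∨ (j : ℕ) + 1 = (i : ℕ)) ∧ u = q i ∧ w = q j) ∨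
      (∃ c ∈ short, (u = p c.1 ∧ w = q c.2) ∨ (u = q c.2 ∧ w = p c.1)) ∨
      (∃ m ∈ M, (u = m ∧ (w = p (ends m).1 ∨ w = q (ends m).2)) ∨
                (w = m ∧ (u = p (ends m).1 ∨ u = q (ends m).2)))

/-- A graph is a track if it admits a track representation. -/
def IsTrack {V : Type u} (G : SimpleGraph V) : Prop := Nonempty (TrackRep G)

/-- A graph is a partial track if it is (isomorphic to) a subgraph of a track. -/
def IsPartialTrack {V : Type u} (G : SimpleGraph V) : Prop :=
  ∃ (W : Type) (T : SimpleGraph W) (f : V → W),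
    IsTrack T ∧ Function.Injective f ∧ ∀ ⦃a b : V⦄, G.Adj a b → T.Adj (f a) (f b)

/-- `r` can play the role of a corner of `G`: some track representation of `G` has `r`
as one of the four corners `p₁, p_k, q₁, q_ℓ`. -/
def CanBeCorner {V : Type u} (G : SimpleGraph V) (r : V) : Prop :=
  ∃ T : TrackRep G,
    r = T.p ⟨0, T.kpos⟩ ∨ r = T.p ⟨T.k - 1, Nat.sub_lt T.kpos Nat.one_pos⟩ ∨
    r = T.q ⟨0, T.lpos⟩ ∨ r = T.q ⟨T.l - 1, Nat.sub_lt T.lpos Nat.one_pos⟩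

/-- `r` and `r'` can play the role of opposite corners of `G`. -/
def CanBeOppositeCorners {V : Type u} (G : SimpleGraph V) (r r' : V) : Prop :=
  ∃ T : TrackRep G,
    (r = T.p ⟨0, T.kpos⟩ ∨ r = T.q ⟨0, T.lpos⟩) ∧
    (r' = T.p ⟨T.k - 1, Nat.sub_lt T.kpos Nat.one_pos⟩ ∨
     r' = T.q ⟨T.l - 1, Nat.sub_lt T.lpos Nat.one_pos⟩)

/-- `r` can play the role of a degenerate side of `G`: some track representation has `k = 1`
and `p₁ = r`. -/
def CanBeDegenerateSide {V : Type u} (G : SimpleGraph V) (r : V) : Prop :=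
  ∃ T : TrackRep G, T.k = 1 ∧ r = T.p ⟨0, T.kpos⟩

/-- Two edges are equal or lie on a common cycle. -/
def OnCommonCycle {V : Type u} (G : SimpleGraph V) (e f : Sym2 V) : Prop :=
  e = f ∨ ∃ (x : V) (c : G.Walk x x), c.IsCycle ∧ e ∈ c.edges ∧ f ∈ c.edges

/-- The subgraph of `G` spanned by a set `F` of edges. -/
def edgeSpan {V : Type u} (G : SimpleGraph V) (F : Set (Sym2 V)) : G.Subgraph where
  verts := {a | ∃ b, G.Adj a b ∧ s(a, b) ∈ F}
  Adj a b := G.Adj a b ∧ s(a, b) ∈ F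
  adj_sub h := h.1
  edge_vert h := ⟨_, h.1, h.2⟩
  symm := ⟨fun a b h => ⟨h.1.symm, by rw [Sym2.eq_swap]; exact h.2⟩⟩

/-- `B` is a block of `G`: the subgraph spanned by an equivalence class of edges under the
relation "being equal or lying on a common cycle". -/
def IsBlock {V : Type u} (G : SimpleGraph V) (B : G.Subgraph) : Prop :=
  ∃ e ∈ G.edgeSet, B = edgeSpan G {f | OnCommonCycle G e f}

/-- A cut vertex: a vertex whose removal disconnects the (connected) graph. -/
def IsCutVertex {V : Type u} (G : SimpleGraph V) (v : V) : Prop :=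
  G.Connected ∧ ¬ (G.induce ({v}ᶜ : Set V)).Connected

/-- The subgraph `B` of `G` (as an abstract graph) is a track. -/
def SubIsTrack {V : Type u} {G : SimpleGraph V} (B : G.Subgraph) : Prop :=
  IsTrack B.coe

/-- The vertex `r` can play the role of a corner of the subgraph `B`. -/
def SubCanBeCorner {V : Type u} {G : SimpleGraph V} (B : G.Subgraph) (r : V) : Prop :=
  ∃ h : r ∈ B.verts, CanBeCorner B.coe ⟨r, h⟩

/-- The vertices `r, r'` can play the role of opposite corners of the subgraph `B`. -/
def SubCanBeOppositeCorners {V : Type u} {G : SimpleGraph V} (B : G.Subgraph)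
    (r r' : V) : Prop :=
  ∃ (h : r ∈ B.verts) (h' : r' ∈ B.verts), CanBeOppositeCorners B.coe ⟨r, h⟩ ⟨r', h'⟩

/-- The vertex `r` can play the role of a degenerate side of the subgraph `B`. -/
def SubCanBeDegenerateSide {V : Type u} {G : SimpleGraph V} (B : G.Subgraph) (r : V) : Prop :=
  ∃ h : r ∈ B.verts, CanBeDegenerateSide B.coe ⟨r, h⟩

/-- `C` is a longest cycle of `G`. -/
def IsLongestCycle {V : Type u} (G : SimpleGraph V) {x : V} (C : G.Walk x x) : Prop :=
  C.IsCycle ∧ ∀ (y : V) (D : G.Walk y y), D.IsCycle → D.length ≤ C.length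

/-- `N` is (the vertex set of) a connected component of `G − S`. -/
def IsCompOf {V : Type u} (G : SimpleGraph V) (S N : Set V) : Prop :=
  N.Nonempty ∧ N ⊆ Sᶜ ∧ (G.induce N).Connected ∧
    ∀ a ∈ N, ∀ b, b ∉ S → G.Adj a b → b ∈ N

/-- The subgraph consisting of all edges of `G` incident to a vertex of `N`
(together with their endpoints). -/
def bridgeFromComp {V : Type u} (G : SimpleGraph V) (N : Set V) : G.Subgraph where
  verts := {a | ∃ b, G.Adj a b ∧ (a ∈ N ∨ b ∈ N)}
  Adj a b := G.Adj a b ∧ (a ∈ N ∨ b ∈ N)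
  adj_sub h := h.1
  edge_vert h := ⟨_, h.1, h.2⟩
  symm := ⟨fun a b h => ⟨h.1.symm, h.2.symm⟩⟩

/-- `B` is a bridge of the cycle `C` in `G`: either the subgraph of all edges incident to a
component of `G − V(C)`, or a single edge of `G` joining two vertices of `C` and not lying
on `C`. -/
def IsBridgeOf {V : Type u} (G : SimpleGraph V) {x : V} (C : G.Walk x x)
    (B : G.Subgraph) : Prop :=
  (∃ N : Set V, IsCompOf G {a | a ∈ C.support} N ∧ B = bridgeFromComp G N) ∨
  (∃ (a b : V) (h : G.Adj a b), a ∈ C.support ∧ b ∈ C.support ∧ s(a, b) ∉ C.edges ∧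
      B = G.subgraphOfAdj h)

/-- The legs of a bridge `B` of a cycle `C`: the vertices of `B` lying on `C`. -/
def legs {V : Type u} {G : SimpleGraph V} {x : V} (C : G.Walk x x) (B : G.Subgraph) : Set V :=
  {a | a ∈ B.verts ∧ a ∈ C.support}

/-- `z` lies strictly between `a` and `b` in the linear order given by the list `L`. -/
def posBetween {V : Type u} [DecidableEq V] (L : List V) (a b z : V) : Prop :=
  (L.idxOf a < L.idxOf z ∧ L.idxOf z < L.idxOf b) ∨
  (L.idxOf b < L.idxOf z ∧ L.idxOf z < L.idxOf a)

/-- The pairs `{a₁, a₂}` and `{b₁, b₂}` are crossing pairs on the cyclic order given by the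
list `L`: the pairs are disjoint pairs of distinct vertices and the four vertices alternate
cyclically (equivalently, exactly one of `b₁, b₂` lies strictly between `a₁` and `a₂`). -/
def CrossingPairs {V : Type u} [DecidableEq V] (L : List V) (a₁ a₂ b₁ b₂ : V) : Prop :=
  a₁ ≠ a₂ ∧ b₁ ≠ b₂ ∧ a₁ ≠ b₁ ∧ a₁ ≠ b₂ ∧ a₂ ≠ b₁ ∧ a₂ ≠ b₂ ∧
    Xor' (posBetween L a₁ a₂ b₁) (posBetween L a₁ a₂ b₂)

/-- Two bridges of a cycle `C` cross: some pair of legs of one and some pair of legs of the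
other are crossing pairs along `C`. -/
def BridgesCross {V : Type u} [DecidableEq V] {G : SimpleGraph V} {x : V} (C : G.Walk x x)
    (B₁ B₂ : G.Subgraph) : Prop :=
  ∃ a₁ ∈ legs C B₁, ∃ a₂ ∈ legs C B₁, ∃ b₁ ∈ legs C B₂, ∃ b₂ ∈ legs C B₂,
    CrossingPairs C.support.tail a₁ a₂ b₁ b₂

theorem Set.iInter_nonempty_of_ordConnected {ι κ : Type*} [LinearOrder ι] [WellFoundedLT ι]
    [Finite κ] [Nonempty κ] (I : κ → Set ι) (hI : ∀ t, (I t).OrdConnected)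
    (hmeet : ∀ s t, (I s ∩ I t).Nonempty) : (⋂ t, I t).Nonempty := by
  have hne (t : κ) : (I t).Nonempty := by simpa using hmeet t t
  let low (t : κ) : ι := wellFounded_lt.min (I t) (hne t)
  -- The largest of the least elements lies in every `I t`.
  obtain ⟨s, hs⟩ := Finite.exists_max low
  refine ⟨low s, Set.mem_iInter.mpr fun t => ?_⟩
  obtain ⟨p, hpt, hps⟩ := hmeet t s
  exact (hI t).out (wellFounded_lt.min_mem _ (hne t)) hpt
    ⟨hs t, wellFounded_lt.min_le hps⟩

theorem Set.mem_uIcc_or_mem_uIcc_or_mem_uIcc {ι : Type*} [LinearOrder ι] (a b c : ι) :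
    a ∈ Set.uIcc b c ∨ b ∈ Set.uIcc a c ∨ c ∈ Set.uIcc a b := by
  simp only [Set.mem_uIcc]
  rcases le_total a b with hab | hab <;> rcases le_total b c with hbc | hbc <;>
    rcases le_total a c with hac | hac <;> tauto

theorem Finset.four_le_card {α : Type*} [DecidableEq α] {s : Finset α} {a b c d : α}
    (ha : a ∈ s) (hb : b ∈ s) (hc : c ∈ s) (hd : d ∈ s) (hab : a ≠ b) (hac : a ≠ c)
    (had : a ≠ d) (hbc : b ≠ c) (hbd : b ≠ d) (hcd : c ≠ d) : 4 ≤ s.card := by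
  have h := Finset.card_le_card
    (show ({a, b, c, d} : Finset α) ⊆ s by simp [Finset.insert_subset_iff, *])
  rwa [Finset.card_insert_of_notMem (by simp [*]), Finset.card_insert_of_notMem (by simp [*]),
    Finset.card_pair hcd] at h

namespace SimpleGraph.Walk

variable {V : Type u} {G : SimpleGraph V} {a b : V}

def InternallyDisjoint (p q : G.Walk a b) : Prop :=
  ∀ v ∈ p.support, v ∈ q.support → v = a ∨ v = b

theorem InternallyDisjoint.symm {p q : G.Walk a b} (h : p.InternallyDisjoint q) :
    q.InternallyDisjoint p :=
  fun v hq hp => h v hp hq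

theorem IsPath.getVert_ne_getVert {p : G.Walk a b} (hp : p.IsPath) {n m : ℕ}
    (hn : n ≤ p.length) (hm : m ≤ p.length) (hnm : n ≠ m) : p.getVert n ≠ p.getVert m :=
  fun h => hnm (hp.getVert_injOn hn hm h)

theorem InternallyDisjoint.getVert_notMem_support {p q : G.Walk a b}
    (h : p.InternallyDisjoint q) (hp : p.IsPath) {n : ℕ} (h0 : 0 < n) (hn : n < p.length) :
    p.getVert n ∉ q.support := by
  intro hq
  rcases h _ (p.getVert_mem_support n) hq with h' | h'
  · exact hp.getVert_ne_getVert hn.le (Nat.zero_le _) h0.ne' (h'.trans p.getVert_zero.symm)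
  · exact hp.getVert_ne_getVert hn.le le_rfl hn.ne (h'.trans p.getVert_length.symm)

theorem exists_getVert_eq_of_mem_support_drop {p : G.Walk a b} {k : ℕ} (hk : k ≤ p.length)
    {v : V} (hv : v ∈ (p.drop k).support) : ∃ m, k ≤ m ∧ m ≤ p.length ∧ p.getVert m = v := by
  obtain ⟨m, rfl, hm⟩ := mem_support_iff_exists_getVert.mp hv
  rw [drop_length] at hm
  exact ⟨k + m, by omega, by omega, (p.drop_getVert k m).symm⟩

theorem InternallyDisjoint.getVert_ne_getVert {p r : G.Walk a b} (h : p.InternallyDisjoint r)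
    (hp : p.IsPath) (hr : r.IsPath) (hp2 : 2 ≤ p.length) {n m : ℕ} (hn : n ≤ 1) (hm : 2 ≤ m)
    (hmr : m ≤ r.length) : p.getVert n ≠ r.getVert m := by
  interval_cases n
  · simpa using hr.getVert_ne_getVert (n := 0) (by omega) hmr (by omega)
  · exact fun h' => h.getVert_notMem_support hp one_pos (by omega) (h' ▸ r.getVert_mem_support m)

theorem InternallyDisjoint.exists_disjoint_walks {p r : G.Walk a b} (h : p.InternallyDisjoint r)
    (hp : p.IsPath) (hr : r.IsPath) (hp2 : 2 ≤ p.length) (hr2 : 2 ≤ r.length) :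
    ∃ (W₁ : G.Walk (p.getVert 1) (r.getVert 1)) (W₂ : G.Walk (p.getVert 2) (r.getVert 2)),
      W₁.support.Disjoint W₂.support ∧
        ∀ v ∈ W₁.support ++ W₂.support, v ∈ p.support ∨ v ∈ r.support := by
  have hadj (s : G.Walk a b) (hs : 1 ≤ s.length) : G.Adj a (s.getVert 1) := by
    simpa using s.adj_getVert_succ (i := 0) hs
  have hfar {v : V} (hv : v ∈ ((p.drop 2).append (r.drop 2).reverse).support) :
      (∃ m, 2 ≤ m ∧ m ≤ p.length ∧ p.getVert m = v) ∨
        ∃ m, 2 ≤ m ∧ m ≤ r.length ∧ r.getVert m = v := by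
    rw [mem_support_append_iff, support_reverse, List.mem_reverse] at hv
    exact hv.imp (exists_getVert_eq_of_mem_support_drop hp2)
      (exists_getVert_eq_of_mem_support_drop hr2)
  refine ⟨.cons (hadj p (by omega)).symm (.cons (hadj r (by omega)) .nil),
    (p.drop 2).append (r.drop 2).reverse, fun v hv₁ hv₂ => ?_, fun v hv => ?_⟩
  · simp only [support_cons, support_nil, List.mem_cons, List.not_mem_nil, or_false] at hv₁
    rcases hfar hv₂ with ⟨m, hm, hmp, rfl⟩ | ⟨m, hm, hmr, rfl⟩ <;> rcases hv₁ with h₁ | h₁ | h₁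
    · exact hp.getVert_ne_getVert (by omega) hmp (by omega) h₁.symm
    · exact hp.getVert_ne_getVert (n := 0) (by omega) hmp (by omega) (by simpa using h₁.symm)
    · exact h.symm.getVert_ne_getVert hr hp hr2 le_rfl hm hmp h₁.symm
    · exact h.getVert_ne_getVert hp hr hp2 le_rfl hm hmr h₁.symm
    · exact h.getVert_ne_getVert hp hr hp2 (n := 0) zero_le_one hm hmr (by simpa using h₁.symm)
    · exact hr.getVert_ne_getVert (by omega) hmr (by omega) h₁.symm
  · rw [List.mem_append] at hv
    rcases hv with hv | hv
    · simp only [support_cons, support_nil, List.mem_cons, List.not_mem_nil, or_false] at hv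
      rcases hv with rfl | rfl | rfl <;> simp [getVert_mem_support]
    · rcases hfar hv with ⟨m, -, -, rfl⟩ | ⟨m, -, -, rfl⟩ <;> simp [getVert_mem_support]

theorem IsPath.start_notMem_support_tail {p : G.Walk a b} (hp : p.IsPath) :
    a ∉ p.support.tail :=
  (List.nodup_cons.mp (p.cons_tail_support ▸ hp.support_nodup)).1

theorem InternallyDisjoint.isCycle_append_reverse {p q : G.Walk a b}
    (h : p.InternallyDisjoint q) (hp : p.IsPath) (hq : q.IsPath)
    (hlen : 1 < p.length ∨ 1 < q.length) : (p.append q.reverse).IsCycle := by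
  refine hp.isCycle_append hq.reverse (fun v hvp hvq => ?_) (by simpa using hlen)
  rcases h v (List.mem_of_mem_tail hvp)
      (by simpa using List.mem_of_mem_tail hvq) with rfl | rfl
  · exact hp.start_notMem_support_tail hvp
  · exact hq.reverse.start_notMem_support_tail hvq

theorem IsCycle.internallyDisjoint_takeUntil_dropUntil [DecidableEq V] {c : G.Walk a a}
    (hc : c.IsCycle) (hb : b ∈ c.support) :
    (c.takeUntil b hb).InternallyDisjoint (c.dropUntil b hb).reverse := by
  intro v hv₁ hv₂
  rw [support_reverse, List.mem_reverse] at hv₂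
  by_contra! hv
  have hnd := hc.support_nodup
  rw [← c.take_spec hb, tail_support_append] at hnd
  exact List.disjoint_of_nodup_append hnd
    (((c.takeUntil b hb).mem_support_iff.mp hv₁).resolve_left hv.1)
    (((c.dropUntil b hb).mem_support_iff.mp hv₂).resolve_left hv.2)

end SimpleGraph.Walk

namespace PathDecomp

variable {V : Type u} {G : SimpleGraph V} (D : PathDecomp G)

def meets (S : Set V) : Set (Fin D.n) := {i | ∃ v ∈ D.bag i, v ∈ S}

theorem exists_mem_support_mem_bag {u w : V} (p : G.Walk u w) {i j k : Fin D.n}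
    (hij : i ≤ j) (hjk : j ≤ k) (hu : u ∈ D.bag i) (hw : w ∈ D.bag k) :
    ∃ v ∈ p.support, v ∈ D.bag j := by
  induction p generalizing i with
  | nil => exact ⟨_, Walk.start_mem_support _, D.interp i j k hij hjk _ hu hw⟩
  | @cons a b c hab q ih =>
    obtain ⟨m, ham, hbm⟩ := D.edge_bag hab
    rcases le_total j m with hjm | hmj
    · exact ⟨a, Walk.start_mem_support _, D.interp i j m hij hjm a hu ham⟩
    · obtain ⟨v, hv, hvj⟩ := ih hmj hbm hw
      exact ⟨v, Walk.support_cons _ _ ▸ List.mem_cons_of_mem _ hv, hvj⟩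

theorem ordConnected_meets {S : Set V} (hS : (G.induce S).Preconnected) :
    (D.meets S).OrdConnected := by
  refine ⟨fun i ⟨u, hui, huS⟩ k ⟨w, hwk, hwS⟩ j ⟨hij, hjk⟩ => ?_⟩
  obtain ⟨p⟩ := hS ⟨u, huS⟩ ⟨w, hwS⟩
  obtain ⟨v, hv, hvj⟩ := D.exists_mem_support_mem_bag (p.map (Embedding.induce S).toHom)
    hij hjk hui hwk
  rw [Walk.support_map, List.mem_map] at hv
  obtain ⟨⟨v, hvS⟩, -, rfl⟩ := hv
  exact ⟨v, hvj, hvS⟩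

theorem exists_card_le_card_bag_of_isMinor {κ : Type*} [Fintype κ] [Nonempty κ]
    (h : IsMinor G (completeGraph κ)) : ∃ j, Fintype.card κ ≤ (D.bag j).card := by
  obtain ⟨S, hne, hdisj, hconn, hadj⟩ := h
  have hmeet (s t : κ) : (D.meets (S s) ∩ D.meets (S t)).Nonempty := by
    by_cases hst : s = t
    · subst hst
      obtain ⟨v, hv⟩ := hne s
      obtain ⟨i, hvi⟩ := D.mem_bag v
      exact ⟨i, ⟨v, hvi, hv⟩, ⟨v, hvi, hv⟩⟩
    · obtain ⟨u, hu, v, hv, huv⟩ := hadj hst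
      obtain ⟨i, hui, hvi⟩ := D.edge_bag huv
      exact ⟨i, ⟨u, hui, hu⟩, ⟨v, hvi, hv⟩⟩
  obtain ⟨j, hj⟩ := Set.iInter_nonempty_of_ordConnected _
    (fun t => D.ordConnected_meets (hconn t).preconnected) hmeet
  choose v hvj hvS using Set.mem_iInter.mp hj
  refine ⟨j, Finset.card_le_card_of_injOn v (fun t _ => hvj t) fun s _ t _ hst => ?_⟩
  by_contra hne
  exact Set.disjoint_left.mp (hdisj hne) (hvS s) (hst ▸ hvS t)

theorem four_le_card_bag_of_middle_rung {a b : V} {p q r : G.Walk a b} (hp : p.IsPath)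
    (hq : q.IsPath) (hr : r.IsPath) (hp3 : 3 ≤ p.length) (hq3 : 3 ≤ q.length)
    (hr3 : 3 ≤ r.length) (hpq : p.InternallyDisjoint q) (hqr : q.InternallyDisjoint r)
    (hpr : p.InternallyDisjoint r) {i j k : Fin D.n}
    (hi : p.getVert 1 ∈ D.bag i ∧ p.getVert 2 ∈ D.bag i)
    (hj : q.getVert 1 ∈ D.bag j ∧ q.getVert 2 ∈ D.bag j)
    (hk : r.getVert 1 ∈ D.bag k ∧ r.getVert 2 ∈ D.bag k) (hijk : j ∈ Set.uIcc i k) :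
    4 ≤ (D.bag j).card := by
  classical
  obtain ⟨W₁, W₂, hW, hWpr⟩ := hpr.exists_disjoint_walks hp hr (by omega) (by omega)
  have hmid {x y : V} (W : G.Walk x y) (hx : x ∈ D.bag i) (hy : y ∈ D.bag k) :
      ∃ v ∈ D.bag j, v ∈ W.support :=
    (D.ordConnected_meets W.connected_induce_support.preconnected).uIcc_subset
      ⟨x, hx, W.start_mem_support⟩ ⟨y, hy, W.end_mem_support⟩ hijk
  obtain ⟨u, huj, hu⟩ := hmid W₁ hi.1 hk.1
  obtain ⟨w, hwj, hw⟩ := hmid W₂ hi.2 hk.2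
  have hq_out {n : ℕ} (h0 : 0 < n) (hn : n < q.length) {v : V}
      (hv : v ∈ W₁.support ++ W₂.support) : q.getVert n ≠ v := by
    rintro rfl
    exact (hWpr _ hv).elim (hpq.symm.getVert_notMem_support hq h0 hn)
      (hqr.getVert_notMem_support hq h0 hn)
  have hu' := List.mem_append_left W₂.support hu
  have hw' := List.mem_append_right W₁.support hw
  exact Finset.four_le_card huj hwj hj.1 hj.2 (fun h => hW hu (h ▸ hw))
    (hq_out one_pos (by omega) hu').symm (hq_out two_pos (by omega) hu').symm
    (hq_out one_pos (by omega) hw').symm (hq_out two_pos (by omega) hw').symm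
    (hq.getVert_ne_getVert (by omega) (by omega) (by omega))

theorem exists_four_le_card_bag_of_theta {a b : V} {p q r : G.Walk a b} (hp : p.IsPath)
    (hq : q.IsPath) (hr : r.IsPath) (hp3 : 3 ≤ p.length) (hq3 : 3 ≤ q.length)
    (hr3 : 3 ≤ r.length) (hpq : p.InternallyDisjoint q) (hqr : q.InternallyDisjoint r)
    (hpr : p.InternallyDisjoint r) : ∃ j, 4 ≤ (D.bag j).card := by
  have rung (s : G.Walk a b) (hs : 3 ≤ s.length) :
      ∃ i, s.getVert 1 ∈ D.bag i ∧ s.getVert 2 ∈ D.bag i :=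
    D.edge_bag (s.adj_getVert_succ (by omega))
  obtain ⟨i, hi⟩ := rung p hp3
  obtain ⟨j, hj⟩ := rung q hq3
  obtain ⟨k, hk⟩ := rung r hr3
  rcases Set.mem_uIcc_or_mem_uIcc_or_mem_uIcc i j k with h | h | h
  · exact ⟨i, D.four_le_card_bag_of_middle_rung hq hp hr hq3 hp3 hr3 hpq.symm hpr hqr hj hi hk h⟩
  · exact ⟨j, D.four_le_card_bag_of_middle_rung hp hq hr hp3 hq3 hr3 hpq hqr hpr hi hj hk h⟩
  · exact ⟨k, D.four_le_card_bag_of_middle_rung hp hr hq hp3 hr3 hq3 hpr hqr.symm hpq hi hk hj h⟩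

end PathDecomp

theorem exists_pathDecomp_card_bag_le {V : Type u} [Fintype V] {G : SimpleGraph V} {k : ℕ}
    (h : pathWidth G ≤ k) : ∃ D : PathDecomp G, ∀ i, (D.bag i).card ≤ k + 1 := by
  obtain ⟨D, hD⟩ := Nat.sInf_mem (s := {w | ∃ D : PathDecomp G, D.width = w})
    ⟨_, ⟨1, fun _ => Finset.univ, fun v => ⟨0, Finset.mem_univ v⟩,
      fun u w _ => ⟨0, Finset.mem_univ u, Finset.mem_univ w⟩, fun _ _ _ _ _ v _ _ =>
      Finset.mem_univ v⟩, rfl⟩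
  refine ⟨D, fun i => ?_⟩
  have hw : D.width ≤ k := hD.trans_le h
  have := Finset.le_sup (f := fun j => (D.bag j).card) (Finset.mem_univ i)
  unfold PathDecomp.width at hw
  omega

section

variable {V : Type u} {G : SimpleGraph V}

theorem isMinor_completeGraph_of_lt {ι : Type*} [LinearOrder ι] (S : ι → Set V)
    (hconn : ∀ t, (G.induce (S t)).Connected) (hdisj : ∀ s t, s < t → Disjoint (S s) (S t))
    (hadj : ∀ s t, s < t → ∃ u ∈ S s, ∃ v ∈ S t, G.Adj u v) :
    IsMinor G (completeGraph ι) := by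
  refine ⟨S, fun t => Set.nonempty_coe_sort.mp (hconn t).nonempty, fun s t hst => ?_, hconn,
    fun s t hst => ?_⟩
  · rcases hst.lt_or_gt with h | h
    exacts [hdisj s t h, (hdisj t s h).symm]
  · rcases hst.lt_or_gt with h | h
    · exact hadj s t h
    · obtain ⟨u, hu, v, hv, huv⟩ := hadj t s h
      exact ⟨v, hv, u, hu, huv.symm⟩

theorem isMinor_completeGraph_four_of_append {a b c : V} (p₁ : G.Walk a b) (p₂ : G.Walk b c)
    (p₃ : G.Walk c a) (hcyc : (p₁.append (p₂.append p₃)).IsCycle) (h₁ : ¬p₁.Nil)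
    (h₂ : ¬p₂.Nil) (h₃ : ¬p₃.Nil) {N : Set V} (hN : (G.induce N).Connected)
    (hNC : ∀ v ∈ N, v ∉ (p₁.append (p₂.append p₃)).support.tail)
    (ha : ∃ m ∈ N, G.Adj a m) (hb : ∃ m ∈ N, G.Adj b m) (hc : ∃ m ∈ N, G.Adj c m) :
    IsMinor G (completeGraph (Fin 4)) := by
  have hnd := hcyc.support_nodup
  rw [Walk.tail_support_append, Walk.tail_support_append] at hNC hnd
  have arc_conn {u w : V} (p : G.Walk u w) (hp : ¬p.Nil) :
      (G.induce {v | v ∈ p.support.tail}).Connected := by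
    rw [← p.support_tail_of_not_nil hp]
    exact p.tail.connected_induce_support
  have arc_disj {l₁ l₂ : List V} (h : l₁.Disjoint l₂) : Disjoint {v | v ∈ l₁} {v | v ∈ l₂} :=
    Set.disjoint_left.mpr fun _ h₁ h₂ => h h₁ h₂
  have arc_adj {u w z : V} (p : G.Walk u w) (q : G.Walk w z) (hp : ¬p.Nil) (hq : ¬q.Nil) :
      ∃ v ∈ {v | v ∈ p.support.tail}, ∃ v' ∈ {v | v ∈ q.support.tail}, G.Adj v v' :=
    ⟨w, p.end_mem_tail_support hp, q.snd, by simpa [q.support_tail_of_not_nil hq] using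
      q.tail.start_mem_support, q.adj_snd hq⟩
  have arc_N {u w : V} (p : G.Walk u w) (hp : ¬p.Nil) (hw : ∃ m ∈ N, G.Adj w m) :
      ∃ v ∈ {v | v ∈ p.support.tail}, ∃ m ∈ N, G.Adj v m :=
    ⟨w, p.end_mem_tail_support hp, hw⟩
  have h1 := List.disjoint_append_right.mp (List.disjoint_of_nodup_append hnd)
  have h23 := List.disjoint_of_nodup_append (List.nodup_append.mp hnd).2.1
  have hN' : Disjoint {v | v ∈ p₁.support.tail ++ (p₂.support.tail ++ p₃.support.tail)} N :=
    Set.disjoint_left.mpr fun v hv hvN => hNC v hvN hv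
  refine isMinor_completeGraph_of_lt ![{v | v ∈ p₁.support.tail}, {v | v ∈ p₂.support.tail},
    {v | v ∈ p₃.support.tail}, N] ?_ ?_ ?_
  · intro t
    fin_cases t
    exacts [arc_conn p₁ h₁, arc_conn p₂ h₂, arc_conn p₃ h₃, hN]
  · intro s t hst
    fin_cases s <;> fin_cases t <;> simp at hst
    exacts [arc_disj h1.1, arc_disj h1.2, hN'.mono_left fun v hv => List.mem_append_left _ hv,
      arc_disj h23,
      hN'.mono_left fun v hv => List.mem_append_right _ (List.mem_append_left _ hv),
      hN'.mono_left fun v hv => List.mem_append_right _ (List.mem_append_right _ hv)]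
  · intro s t hst
    fin_cases s <;> fin_cases t <;> simp at hst
    · exact arc_adj p₁ p₂ h₁ h₂
    · obtain ⟨u, hu, v, hv, huv⟩ := arc_adj p₃ p₁ h₃ h₁
      exact ⟨v, hv, u, hu, huv.symm⟩
    exacts [arc_N p₁ h₁ hb, arc_adj p₂ p₃ h₂ h₃, arc_N p₂ h₂ hc, arc_N p₃ h₃ ha]

theorem isMinor_completeGraph_four_of_cycle [DecidableEq V] {x a b c : V} {C : G.Walk x x}
    (hC : C.IsCycle) (ha : a ∈ C.support) (hb : b ∈ C.support) (hc : c ∈ C.support)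
    (hab : a ≠ b) (hac : a ≠ c) (hbc : b ≠ c) {N : Set V} (hN : (G.induce N).Connected)
    (hNC : ∀ v ∈ N, v ∉ C.support) (haN : ∃ m ∈ N, G.Adj a m) (hbN : ∃ m ∈ N, G.Adj b m)
    (hcN : ∃ m ∈ N, G.Adj c m) : IsMinor G (completeGraph (Fin 4)) := by
  set C₀ := C.rotate a ha
  have hC₀ : C₀.IsCycle := hC.rotate ha
  have hNC₀ : ∀ v ∈ N, v ∉ C₀.support.tail := fun v hv h =>
    hNC v hv ((C.mem_support_rotate_iff a ha).mp (List.mem_of_mem_tail h))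
  have hb₀ : b ∈ C₀.support := (C.mem_support_rotate_iff a ha).mpr hb
  have hc₀ : c ∈ C₀.support := (C.mem_support_rotate_iff a ha).mpr hc
  set P := C₀.takeUntil b hb₀
  set Q := C₀.dropUntil b hb₀
  have hPQ : P.append Q = C₀ := C₀.take_spec hb₀
  rw [← hPQ, Walk.mem_support_append_iff] at hc₀
  rcases hc₀ with hcP | hcQ
  · have e : (P.takeUntil c hcP).append ((P.dropUntil c hcP).append Q) = C₀ := by
      rw [Walk.append_assoc, P.take_spec hcP, hPQ]
    exact isMinor_completeGraph_four_of_append _ _ _ (e ▸ hC₀) (Walk.not_nil_of_ne hac)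
      (Walk.not_nil_of_ne hbc.symm) (Walk.not_nil_of_ne hab.symm) hN (e ▸ hNC₀) haN hcN hbN
  · have e : P.append ((Q.takeUntil c hcQ).append (Q.dropUntil c hcQ)) = C₀ := by
      rw [Q.take_spec hcQ, hPQ]
    exact isMinor_completeGraph_four_of_append _ _ _ (e ▸ hC₀) (Walk.not_nil_of_ne hab)
      (Walk.not_nil_of_ne hbc) (Walk.not_nil_of_ne hac.symm) hN (e ▸ hNC₀) haN hbN hcN

theorem IsLongestCycle.rotate [DecidableEq V] {x a : V} {C : G.Walk x x}
    (hC : IsLongestCycle G C) (ha : a ∈ C.support) : IsLongestCycle G (C.rotate a ha) :=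
  ⟨hC.1.rotate ha, by simpa using hC.2⟩

theorem PathDecomp.length_lt_three_of_isLongestCycle (D : PathDecomp G)
    (hD : ∀ i, (D.bag i).card ≤ 3) [DecidableEq V] {x a b : V} {C : G.Walk x x}
    (hC : IsLongestCycle G C) (ha : a ∈ C.support) (hb : b ∈ C.support) (hab : a ≠ b)
    {R : G.Walk a b} (hR : R.IsPath) (hRC : ∀ v ∈ R.support, v ∈ C.support → v = a ∨ v = b) :
    R.length < 3 := by
  by_contra! hR3
  have hC₀ := hC.rotate ha
  have hb₀ : b ∈ (C.rotate a ha).support := (C.mem_support_rotate_iff a ha).mpr hb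
  set C₀ := C.rotate a ha
  set P := C₀.takeUntil b hb₀
  set Q := (C₀.dropUntil b hb₀).reverse
  have hP : P.IsPath := hC₀.1.isPath_takeUntil hb₀
  have hQ : Q.IsPath := (Walk.IsCycle.isPath_of_append_right (Walk.not_nil_of_ne hab)
    ((C₀.take_spec hb₀).symm ▸ hC₀.1)).reverse
  have hlen : P.length + Q.length = C₀.length := by
    rw [Walk.length_reverse, ← Walk.length_append, C₀.take_spec hb₀]
  have hPQ : P.InternallyDisjoint Q := hC₀.1.internallyDisjoint_takeUntil_dropUntil hb₀
  have hRP : R.InternallyDisjoint P := fun v hvR hvP => hRC v hvR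
    ((C.mem_support_rotate_iff a ha).mp (C₀.support_takeUntil_subset_support hb₀ hvP))
  have hRQ : R.InternallyDisjoint Q := fun v hvR hvQ => hRC v hvR
    ((C.mem_support_rotate_iff a ha).mp (C₀.support_dropUntil_subset_support hb₀
      (by simpa [Q] using hvQ)))
  have h₁ := hC₀.2 _ _ (hRQ.isCycle_append_reverse hR hQ (by omega))
  have h₂ := hC₀.2 _ _ (hRP.symm.isCycle_append_reverse hP hR (by omega))
  simp only [Walk.length_append, Walk.length_reverse] at h₁ h₂
  obtain ⟨j, hj⟩ := D.exists_four_le_card_bag_of_theta hP hQ hR (by omega) (by omega) hR3 hPQ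
    hRQ.symm hRP.symm
  have := hD j
  omega

theorem TwoConnected.exists_adj_notMem (h2 : TwoConnected G) {S : Set V} {v s t : V}
    (hs : s ∈ S) (ht : t ∉ S) (hsv : s ≠ v) (htv : t ≠ v) :
    ∃ u ∈ S, ∃ w ∉ S, w ≠ v ∧ G.Adj u w := by
  obtain ⟨p⟩ := (h2.2 v).preconnected ⟨s, hsv⟩ ⟨t, htv⟩
  let p' := p.map (Embedding.induce _).toHom
  obtain ⟨d, hd, hd₁, hd₂⟩ := p'.exists_boundary_dart S hs ht
  have hv := p'.dart_snd_mem_support_of_mem_darts hd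
  rw [Walk.support_map, List.mem_map] at hv
  obtain ⟨⟨w, hw⟩, -, hw'⟩ := hv
  exact ⟨d.fst, hd₁, d.snd, hd₂, hw' ▸ hw, d.adj⟩

theorem IsCompOf.notMem {S N : Set V} (hN : IsCompOf G S N) {v : V} (hv : v ∈ N) : v ∉ S :=
  hN.2.1 hv

theorem IsCompOf.connected {S N : Set V} (hN : IsCompOf G S N) : (G.induce N).Connected :=
  hN.2.2.1

theorem IsCompOf.mem_or_mem_of_adj {S N : Set V} (hN : IsCompOf G S N) {u w : V}
    (hu : u ∈ N) (huw : G.Adj u w) : w ∈ N ∨ w ∈ S :=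
  (em (w ∈ S)).elim Or.inr fun hw => Or.inl (hN.2.2.2 u hu w hw huw)

theorem exists_leg_ne (h2 : TwoConnected G) {x : V} {C : G.Walk x x} (hC : C.IsCycle)
    {N : Set V} (hN : IsCompOf G {a | a ∈ C.support} N) {v : V} (hv : v ∈ C.support) :
    ∃ a ∈ C.support, a ≠ v ∧ ∃ m ∈ N, G.Adj a m := by
  obtain ⟨m, hm⟩ := hN.1
  obtain ⟨c, hc, hcv⟩ : ∃ c ∈ C.support, c ≠ v := by
    by_cases hx : x = v
    · exact ⟨C.snd, C.getVert_mem_support 1, hx ▸ (C.adj_snd hC.not_nil).ne'⟩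
    · exact ⟨x, C.start_mem_support, hx⟩
  obtain ⟨u, hu, w, hw, hwv, huw⟩ :=
    h2.exists_adj_notMem hm (fun h => hN.notMem h hc) (fun h => hN.notMem hm (h ▸ hv)) hcv
  exact ⟨w, (hN.mem_or_mem_of_adj hu huw).resolve_left hw, hwv, u, hu, huw.symm⟩

theorem PathDecomp.leg_eq_or_eq (D : PathDecomp G) (hD : ∀ i, (D.bag i).card ≤ 3)
    [DecidableEq V] {x : V} {C : G.Walk x x} (hC : C.IsCycle) {N : Set V}
    (hN : IsCompOf G {a | a ∈ C.support} N) {a b c : V} (ha : a ∈ C.support)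
    (hb : b ∈ C.support) (hab : a ≠ b) (haN : ∃ m ∈ N, G.Adj a m) (hbN : ∃ m ∈ N, G.Adj b m)
    (hc : c ∈ C.support) (hcN : ∃ m ∈ N, G.Adj c m) : c = a ∨ c = b := by
  by_contra! hc'
  obtain ⟨j, hj⟩ := D.exists_card_le_card_bag_of_isMinor <|
    isMinor_completeGraph_four_of_cycle hC ha hb hc hab hc'.1.symm hc'.2.symm hN.connected
      (fun _ => hN.notMem) haN hbN hcN
  have := hD j
  simp only [Fintype.card_fin] at hj
  omega

theorem exists_adj_adj_ne (h2 : TwoConnected G) {x : V} {C : G.Walk x x} {N : Set V}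
    (hN : IsCompOf G {a | a ∈ C.support} N) {a b : V} (ha : a ∈ C.support)
    (hlegs : ∀ c ∈ C.support, (∃ m ∈ N, G.Adj c m) → c = a ∨ c = b)
    (haN : ∃ m ∈ N, G.Adj a m) (hbN : ∃ m ∈ N, G.Adj b m) (hNt : N.Nontrivial) :
    ∃ m₁ ∈ N, ∃ m₂ ∈ N, m₁ ≠ m₂ ∧ G.Adj a m₁ ∧ G.Adj b m₂ := by
  by_contra! h
  obtain ⟨m, hm, ham⟩ := haN
  obtain ⟨m', hm', hbm'⟩ := hbN
  have hA : ∀ u ∈ N, G.Adj a u → u = m' := fun u hu hau =>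
    by_contra fun hne => h u hu m' hm' hne hau hbm'
  have hB : ∀ u ∈ N, G.Adj b u → u = m' := fun u hu hbu =>
    (by_contra fun hne => h m hm u hu hne ham hbu : m = u) ▸ hA m hm ham
  obtain ⟨n, hn, hnm'⟩ := hNt.exists_ne m'
  obtain ⟨u, ⟨hu, hum'⟩, w, hw, hwm', huw⟩ := h2.exists_adj_notMem (S := N \ {m'})
    ⟨hn, hnm'⟩ (fun h' => hN.notMem h'.1 ha) hnm' (fun h' => hN.notMem hm' (h' ▸ ha))
  have hwC := (hN.mem_or_mem_of_adj hu huw).resolve_left fun hwN => hw ⟨hwN, hwm'⟩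
  rcases hlegs w hwC ⟨u, hu, huw.symm⟩ with rfl | rfl
  exacts [hum' (hA u hu huw.symm), hum' (hB u hu huw.symm)]

theorem exists_isPath_through {N : Set V} (hN : (G.induce N).Preconnected) {a b m₁ m₂ : V}
    (ha : a ∉ N) (hb : b ∉ N) (hab : a ≠ b) (hm₁ : m₁ ∈ N) (hm₂ : m₂ ∈ N) (hm : m₁ ≠ m₂)
    (h₁ : G.Adj a m₁) (h₂ : G.Adj m₂ b) :
    ∃ R : G.Walk a b, R.IsPath ∧ 3 ≤ R.length ∧ ∀ v ∈ R.support, v = a ∨ v = b ∨ v ∈ N := by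
  classical
  obtain ⟨w⟩ := hN ⟨m₁, hm₁⟩ ⟨m₂, hm₂⟩
  have hwN : ∀ v ∈ (w.map (Embedding.induce N).toHom).support, v ∈ N := fun v hv => by
    rw [Walk.support_map, List.mem_map] at hv
    obtain ⟨⟨v, hvN⟩, -, rfl⟩ := hv
    exact hvN
  let q : G.Walk m₁ m₂ := (w.map (Embedding.induce N).toHom).bypass
  have hqN : ∀ v ∈ q.support, v ∈ N := fun v hv =>
    hwN v (Walk.support_bypass_subset_support _ hv)
  have hq : 1 ≤ q.length := Walk.not_nil_iff_lt_length.mp (Walk.not_nil_of_ne hm)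
  refine ⟨.cons h₁ (q.concat h₂),
    ((Walk.bypass_isPath _).concat (fun h => hb (hqN _ h)) h₂).cons ?_,
    by simp only [Walk.length_cons, Walk.length_concat]; omega, fun v hv => ?_⟩
  · rw [Walk.support_concat, List.mem_append, List.mem_singleton]
    rintro (h | rfl)
    exacts [ha (hqN _ h), hab rfl]
  · rw [Walk.support_cons, Walk.support_concat, List.mem_cons,
      List.mem_append, List.mem_singleton] at hv
    rcases hv with rfl | h | rfl
    exacts [Or.inl rfl, Or.inr (Or.inr (hqN _ h)), Or.inr (Or.inl rfl)]

theorem PathDecomp.subsingleton_of_legs (D : PathDecomp G) (hD : ∀ i, (D.bag i).card ≤ 3)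
    [DecidableEq V] (h2 : TwoConnected G) {x : V} {C : G.Walk x x} (hC : IsLongestCycle G C)
    {N : Set V} (hN : IsCompOf G {a | a ∈ C.support} N) {a b : V} (ha : a ∈ C.support)
    (hb : b ∈ C.support) (hab : a ≠ b)
    (hlegs : ∀ c ∈ C.support, (∃ m ∈ N, G.Adj c m) → c = a ∨ c = b)
    (haN : ∃ m ∈ N, G.Adj a m) (hbN : ∃ m ∈ N, G.Adj b m) : N.Subsingleton := by
  refine Set.not_nontrivial_iff.mp fun hNt => ?_
  obtain ⟨m₁, hm₁, m₂, hm₂, hm, ham₁, hbm₂⟩ := exists_adj_adj_ne h2 hN ha hlegs haN hbN hNt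
  obtain ⟨R, hR, hR3, hRN⟩ := exists_isPath_through hN.connected.preconnected (hN.notMem · ha)
    (hN.notMem · hb) hab hm₁ hm₂ hm ham₁ hbm₂.symm
  have := D.length_lt_three_of_isLongestCycle hD hC ha hb hab hR fun v hv hvC =>
    (hRN v hv).imp_right (Or.resolve_right · fun hvN => hN.notMem hvN hvC)
  omega

theorem bridgeFromComp_singleton {a m b : V} (ha : G.Adj a m) (hb : G.Adj m b)
    (hnbr : ∀ w, G.Adj m w → w = a ∨ w = b) :
    bridgeFromComp G {m} = G.subgraphOfAdj ha ⊔ G.subgraphOfAdj hb := by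
  ext v w
  · simp only [bridgeFromComp, Set.mem_singleton_iff, Set.mem_ofPred_eq, Subgraph.verts_sup,
      subgraphOfAdj_verts, Set.mem_union, Set.mem_insert_iff]
    constructor
    · rintro ⟨w, hvw, rfl | rfl⟩
      · rcases hnbr w hvw with rfl | rfl <;> simp
      · rcases hnbr v hvw.symm with rfl | rfl <;> simp
    · rintro ((rfl | rfl) | rfl | rfl)
      exacts [⟨m, ha, Or.inr rfl⟩, ⟨a, ha.symm, Or.inl rfl⟩, ⟨b, hb, Or.inl rfl⟩,
        ⟨m, hb.symm, Or.inr rfl⟩]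
  · simp only [bridgeFromComp, Set.mem_singleton_iff, Subgraph.sup_adj, subgraphOfAdj_adj]
    constructor
    · rintro ⟨hvw, rfl | rfl⟩
      · rcases hnbr w hvw with rfl | rfl <;> simp [Sym2.eq_swap]
      · rcases hnbr v hvw.symm with rfl | rfl <;> simp [Sym2.eq_swap]
    · rintro (h | h) <;> rcases Sym2.eq_iff.mp h with ⟨rfl, rfl⟩ | ⟨rfl, rfl⟩
      exacts [⟨ha, Or.inr rfl⟩, ⟨ha.symm, Or.inl rfl⟩, ⟨hb, Or.inl rfl⟩, ⟨hb.symm, Or.inr rfl⟩]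

end

/-- Let `G` be a 2-connected finite simple graph with path-width at most 2 and
let `C` be a longest cycle of `G`. Then every bridge of `C` is trivial: a single edge joining
two vertices of `C`, or a path of length two between two vertices of `C` whose middle vertex
is not on `C`. -/
theorem bridge_is_trivial {V : Type u} [Fintype V] (G : SimpleGraph V)
    (h2 : TwoConnected G) (hpw : pathWidth G ≤ 2) {x : V} (C : G.Walk x x)
    (hC : IsLongestCycle G C) (B : G.Subgraph) (hB : IsBridgeOf G C B) :
    (∃ (a b : V) (hab : G.Adj a b), a ∈ C.support ∧ b ∈ C.support ∧
        B = G.subgraphOfAdj hab) ∨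
    (∃ (a m b : V) (h₁ : G.Adj a m) (h₂ : G.Adj m b), a ∈ C.support ∧ b ∈ C.support ∧
        m ∉ C.support ∧ B = G.subgraphOfAdj h₁ ⊔ G.subgraphOfAdj h₂) := by
  classical
  rcases hB with ⟨N, hN, rfl⟩ | ⟨a, b, hab, ha, hb, -, rfl⟩
  swap
  · exact Or.inl ⟨a, b, hab, ha, hb, rfl⟩
  obtain ⟨D, hD⟩ := exists_pathDecomp_card_bag_le hpw
  obtain ⟨a, ha, -, haN⟩ := exists_leg_ne h2 hC.1 hN C.start_mem_support
  obtain ⟨b, hb, hba, hbN⟩ := exists_leg_ne h2 hC.1 hN ha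
  have hlegs : ∀ c ∈ C.support, (∃ m ∈ N, G.Adj c m) → c = a ∨ c = b := fun c hc hcN =>
    D.leg_eq_or_eq hD hC.1 hN ha hb hba.symm haN hbN hc hcN
  obtain ⟨m, hm⟩ := hN.1
  obtain rfl :=
    (D.subsingleton_of_legs hD h2 hC hN ha hb hba.symm hlegs haN hbN).eq_singleton_of_mem hm
  have hnbr : ∀ w, G.Adj m w → w = a ∨ w = b := fun w hmw =>
    hlegs w ((hN.mem_or_mem_of_adj rfl hmw).resolve_left fun h => (h ▸ hmw).ne rfl)
      ⟨m, rfl, hmw.symm⟩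
  obtain ⟨_, rfl, ham⟩ := haN
  obtain ⟨_, rfl, hbm⟩ := hbN
  exact Or.inr ⟨a, _, b, ham, hbm.symm, ha, hb, hN.notMem rfl, bridgeFromComp_singleton _ _ hnbr⟩
end

section
/- Let G be a 2-connected finite simple graph with path-width at most 2 and let C be a longest cycle of G. Then no two bridges of C cross. -/
open SimpleGraph

universe u v

/-!
If legs `a₁, a₂` of one bridge and `b₁, b₂` of another alternate around `C`, the four arcs of
`C` between consecutive legs, with the inner vertices of the two bridges added to the arcs
starting at `a₁` and at `b₁`, are the branch sets of a `K₄`-minor. In a path-decomposition the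
bags met by a connected set form an interval, and pairwise touching intervals share a point, so
some bag meets all four disjoint branch sets: the decomposition has width at least 3.
-/

open Set

namespace SimpleGraph

variable {V : Type u} {G : SimpleGraph V}

lemma Reachable.of_adj_closed {P : V → Prop} (hP : ∀ ⦃a b⦄, G.Adj a b → P a → P b)
    {u v : V} (h : G.Reachable u v) (hu : P u) : P v := by
  obtain ⟨p⟩ := h
  induction p with
  | nil => exact hu
  | cons hadj _ ih => exact ih (hP hadj hu)

lemma induce_singleton_connected (v : V) : (G.induce {v}).Connected :=
  @Connected.mk _ _ Preconnected.of_subsingleton ⟨⟨v, rfl⟩⟩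

lemma induce_insert_connected {s : Set V} {a b : V} (hs : (G.induce s).Connected)
    (hb : b ∈ s) (hab : G.Adj a b) : (G.induce (insert a s)).Connected := by
  simpa [singleton_union] using
    connected_induce_union (induce_singleton_connected a).preconnected hs.preconnected
      (mem_singleton a) hb hab

lemma induce_image_Ico_connected {d : ℕ → V} (hd : ∀ m, G.Adj (d m) (d (m + 1)))
    {a b : ℕ} (hab : a < b) : (G.induce (d '' Ico a b)).Connected := by
  obtain ⟨k, rfl⟩ := Nat.exists_eq_add_of_lt hab
  induction k generalizing a with
  | zero =>
    have hIco : Ico a (a + 0 + 1) = {a} := by ext m; simp only [mem_Ico, mem_singleton_iff]; omega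
    rw [hIco, image_singleton]
    exact induce_singleton_connected (d a)
  | succ k ih =>
    have hIco : Ico a (a + (k + 1) + 1) = insert a (Ico (a + 1) (a + 1 + k + 1)) := by
      ext m; simp only [mem_Ico, mem_insert_iff]; omega
    rw [hIco, image_insert_eq]
    exact induce_insert_connected (ih (by omega)) ⟨a + 1, by simp, rfl⟩ (hd a)

def AdjSets (G : SimpleGraph V) (s t : Set V) : Prop :=
  ∃ u ∈ s, ∃ w ∈ t, G.Adj u w

lemma AdjSets.symm {s t : Set V} (h : G.AdjSets s t) : G.AdjSets t s :=
  let ⟨u, hu, w, hw, huw⟩ := h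
  ⟨w, hw, u, hu, huw.symm⟩

lemma AdjSets.mono {s s' t t' : Set V} (h : G.AdjSets s t) (hs : s ⊆ s') (ht : t ⊆ t') :
    G.AdjSets s' t' :=
  let ⟨u, hu, w, hw, huw⟩ := h
  ⟨u, hs hu, w, ht hw, huw⟩

lemma isMinor_top_fin_four {S₁ S₂ S₃ S₄ : Set V}
    (c₁ : (G.induce S₁).Connected) (c₂ : (G.induce S₂).Connected)
    (c₃ : (G.induce S₃).Connected) (c₄ : (G.induce S₄).Connected)
    (d₁₂ : Disjoint S₁ S₂) (d₁₃ : Disjoint S₁ S₃) (d₁₄ : Disjoint S₁ S₄)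
    (d₂₃ : Disjoint S₂ S₃) (d₂₄ : Disjoint S₂ S₄) (d₃₄ : Disjoint S₃ S₄)
    (a₁₂ : G.AdjSets S₁ S₂) (a₁₃ : G.AdjSets S₁ S₃) (a₁₄ : G.AdjSets S₁ S₄)
    (a₂₃ : G.AdjSets S₂ S₃) (a₂₄ : G.AdjSets S₂ S₄) (a₃₄ : G.AdjSets S₃ S₄) :
    IsMinor G (⊤ : SimpleGraph (Fin 4)) := by
  have c : ∀ t, (G.induce (![S₁, S₂, S₃, S₄] t)).Connected := by
    intro t; fin_cases t <;> assumption
  refine ⟨![S₁, S₂, S₃, S₄], fun t => nonempty_coe_sort.mp (c t).nonempty, ?_, c, ?_⟩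
  · intro t t' h
    fin_cases t <;> fin_cases t' <;>
      first | exact absurd rfl h | assumption | exact Disjoint.symm ‹_›
  · intro t t' h
    fin_cases t <;> fin_cases t' <;>
      first | exact absurd rfl h | assumption | exact AdjSets.symm ‹_›

def LinkedThrough (G : SimpleGraph V) (I : Set V) (a b : V) : Prop :=
  (G.induce (insert a I)).Connected ∧ G.AdjSets (insert a I) {b}

section Arcs

variable {d : ℕ → V}

lemma disjoint_image_Ico_of_injOn {j j' a b c e : ℕ} (hinj : InjOn d (Ico j j')) (ha : j ≤ a)
    (hbc : b ≤ c) (he : e ≤ j') : Disjoint (d '' Ico a b) (d '' Ico c e) := by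
  rw [Set.disjoint_left]
  rintro _ ⟨m, hm, rfl⟩ ⟨m', hm', h⟩
  simp only [mem_Ico] at hm hm'
  have := hinj (by simp only [mem_Ico]; omega) (by simp only [mem_Ico]; omega) h
  omega

lemma adjSets_image_Ico (hd : ∀ m, G.Adj (d m) (d (m + 1))) {a b c : ℕ} (hab : a < b)
    (hbc : b < c) : G.AdjSets (d '' Ico a b) (d '' Ico b c) :=
  ⟨d (b - 1), ⟨b - 1, by simp; omega, rfl⟩, d b, mem_image_of_mem d (left_mem_Ico.2 hbc),
    by simpa [Nat.sub_add_cancel (by omega : 1 ≤ b)] using hd (b - 1)⟩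

variable {I : Set V} {a b : ℕ} {v : V}

lemma LinkedThrough.induce_image_Ico_union_connected (hl : G.LinkedThrough I (d a) v)
    (hd : ∀ m, G.Adj (d m) (d (m + 1))) (hab : a < b) :
    (G.induce (d '' Ico a b ∪ I)).Connected := by
  have ha : d a ∈ d '' Ico a b := mem_image_of_mem d (left_mem_Ico.2 hab)
  rw [← insert_eq_of_mem (mem_union_left I ha), ← union_insert]
  exact induce_union_connected (induce_image_Ico_connected hd hab).preconnected
    hl.1.preconnected ⟨d a, ha, mem_insert _ _⟩

lemma LinkedThrough.adjSets_image_Ico_union (hl : G.LinkedThrough I (d a) v) (hab : a < b)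
    {s : Set V} (hv : v ∈ s) : G.AdjSets (d '' Ico a b ∪ I) s :=
  hl.2.mono (insert_subset (mem_union_left I (mem_image_of_mem d (left_mem_Ico.2 hab)))
    subset_union_right) (singleton_subset_iff.2 hv)

/-- The branch sets are `d '' Ico j₁ j₂ ∪ I`, `d '' Ico j₂ j₃ ∪ J`, `d '' Ico j₃ j₄` and
`d '' Ico j₄ j₅`. -/
lemma isMinor_top_fin_four_of_linkedThrough (hd : ∀ m, G.Adj (d m) (d (m + 1)))
    {j₁ j₂ j₃ j₄ j₅ : ℕ} (h₁₂ : j₁ < j₂) (h₂₃ : j₂ < j₃) (h₃₄ : j₃ < j₄) (h₄₅ : j₄ < j₅)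
    (hinj : InjOn d (Ico j₁ j₅)) (hclosed : d j₅ = d j₁) {J : Set V}
    (hI : Disjoint I (d '' Ico j₁ j₅)) (hJ : Disjoint J (d '' Ico j₁ j₅)) (hIJ : Disjoint I J)
    (hIl : G.LinkedThrough I (d j₁) (d j₃)) (hJl : G.LinkedThrough J (d j₂) (d j₄)) :
    IsMinor G (⊤ : SimpleGraph (Fin 4)) := by
  have hwrap : G.AdjSets (d '' Ico j₄ j₅) (d '' Ico j₁ j₂) := by
    refine (adjSets_image_Ico hd h₄₅ (lt_add_one j₅)).mono subset_rfl ?_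
    rintro _ ⟨m, hm, rfl⟩
    obtain rfl : m = j₅ := by simp only [mem_Ico] at hm; omega
    exact hclosed ▸ mem_image_of_mem d (left_mem_Ico.2 h₁₂)
  have hI' : ∀ {a b}, j₁ ≤ a → b ≤ j₅ → Disjoint I (d '' Ico a b) :=
    fun ha hb => hI.mono_right (image_mono (Ico_subset_Ico ha hb))
  have hJ' : ∀ {a b}, j₁ ≤ a → b ≤ j₅ → Disjoint J (d '' Ico a b) :=
    fun ha hb => hJ.mono_right (image_mono (Ico_subset_Ico ha hb))
  refine isMinor_top_fin_four (hIl.induce_image_Ico_union_connected hd h₁₂)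
    (hJl.induce_image_Ico_union_connected hd h₂₃) (induce_image_Ico_connected hd h₃₄)
    (induce_image_Ico_connected hd h₄₅) ?_ ?_ ?_ ?_ ?_ ?_
    ((adjSets_image_Ico hd h₁₂ h₂₃).mono subset_union_left subset_union_left)
    (hIl.adjSets_image_Ico_union h₁₂ (mem_image_of_mem d (left_mem_Ico.2 h₃₄)))
    (hwrap.symm.mono subset_union_left subset_rfl)
    ((adjSets_image_Ico hd h₂₃ h₃₄).mono subset_union_left subset_rfl)
    (hJl.adjSets_image_Ico_union h₂₃ (mem_image_of_mem d (left_mem_Ico.2 h₄₅)))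
    (adjSets_image_Ico hd h₃₄ h₄₅)
  all_goals
    try simp only [disjoint_union_left, disjoint_union_right]
    and_intros <;>
    first
      | exact disjoint_image_Ico_of_injOn hinj (by omega) (by omega) (by omega)
      | exact hI' (by omega) (by omega)
      | exact hJ' (by omega) (by omega) | exact (hJ' (by omega) (by omega)).symm
      | exact hIJ

end Arcs

end SimpleGraph

namespace PathDecomp

variable {V : Type u} {G : SimpleGraph V} (D : PathDecomp G)

lemma card_bag_le_width_add_one (i : Fin D.n) : (D.bag i).card ≤ D.width + 1 := by
  have := Finset.le_sup (f := fun i => (D.bag i).card) (Finset.mem_univ i)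
  unfold width
  omega

lemma exists_mem_bag_of_le_of_le {S : Set V} (hS : (G.induce S).Connected) {i j k : Fin D.n}
    (hij : i ≤ j) (hjk : j ≤ k) (hi : ∃ v ∈ S, v ∈ D.bag i) (hk : ∃ v ∈ S, v ∈ D.bag k) :
    ∃ v ∈ S, v ∈ D.bag j := by
  by_contra! hj
  have hleft : ∀ ⦃a b : S⦄, (G.induce S).Adj a b →
      (∃ m < j, (a : V) ∈ D.bag m) → ∃ m < j, (b : V) ∈ D.bag m := by
    rintro ⟨a, ha⟩ ⟨b, hb⟩ hab ⟨m, hmj, ham⟩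
    obtain ⟨m', ham', hbm'⟩ := D.edge_bag hab
    refine ⟨m', lt_of_not_ge fun hjm' => hj a ha ?_, hbm'⟩
    exact D.interp m j m' hmj.le hjm' a ham ham'
  obtain ⟨u, hu, hui⟩ := hi
  obtain ⟨w, hw, hwk⟩ := hk
  have hij' : i < j := lt_of_le_of_ne hij fun h => hj u hu (h ▸ hui)
  obtain ⟨m, hmj, hwm⟩ := (hS.preconnected ⟨u, hu⟩ ⟨w, hw⟩).of_adj_closed hleft ⟨i, hij', hui⟩
  exact hj w hw (D.interp m j k hmj.le hjk w hwm hwk)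

lemma exists_bag_meets_all {ι : Type*} [Fintype ι] [Nonempty ι] {S : ι → Set V}
    (hS : ∀ t, (G.induce (S t)).Connected) (hadj : Pairwise fun t t' => G.AdjSets (S t) (S t')) :
    ∃ i, ∀ t, ∃ v ∈ S t, v ∈ D.bag i := by
  classical
  let J t : Finset (Fin D.n) := {i | ∃ v ∈ S t, v ∈ D.bag i}
  have hJ : ∀ t, (J t).Nonempty := fun t => by
    obtain ⟨v, hv⟩ := Set.nonempty_coe_sort.mp (hS t).nonempty
    obtain ⟨i, hi⟩ := D.mem_bag v
    exact ⟨i, by simpa [J] using ⟨v, hv, hi⟩⟩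
  obtain ⟨t₀, -, hmax⟩ := Finset.exists_max_image Finset.univ (fun t => (J t).min' (hJ t))
    Finset.univ_nonempty
  refine ⟨(J t₀).min' (hJ t₀), fun t => ?_⟩
  have hmin : ∀ t, ∃ v ∈ S t, v ∈ D.bag ((J t).min' (hJ t)) := fun t => by
    simpa [J] using (J t).min'_mem (hJ t)
  by_cases ht : t = t₀
  · exact ht ▸ hmin t₀
  obtain ⟨u, hu, w, hw, huw⟩ := hadj ht
  obtain ⟨i, hui, hwi⟩ := D.edge_bag huw
  exact D.exists_mem_bag_of_le_of_le (hS t) (hmax t (Finset.mem_univ t))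
    ((J t₀).min'_le i (by simpa [J] using ⟨w, hw, hwi⟩)) (hmin t) ⟨u, hu, hui⟩

lemma card_le_width_add_one_of_isMinor {ι : Type*} [Fintype ι]
    (h : IsMinor G (⊤ : SimpleGraph ι)) : Fintype.card ι ≤ D.width + 1 := by
  obtain ⟨S, -, hdisj, hconn, hadj⟩ := h
  cases isEmpty_or_nonempty ι
  · simp
  obtain ⟨i, hi⟩ := D.exists_bag_meets_all hconn fun t t' htt' => hadj htt'
  choose v hvS hvi using hi
  calc Fintype.card ι ≤ (D.bag i).card :=
        Finset.card_le_card_of_injOn v (fun t _ => hvi t)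
          fun t _ t' _ hv => by_contra fun h => (hdisj h).ne_of_mem (hvS t) (hvS t') hv
    _ ≤ D.width + 1 := D.card_bag_le_width_add_one i

def single [Fintype V] (G : SimpleGraph V) : PathDecomp G where
  n := 1
  bag _ := Finset.univ
  mem_bag _ := ⟨0, Finset.mem_univ _⟩
  edge_bag _ _ _ := ⟨0, Finset.mem_univ _, Finset.mem_univ _⟩
  interp _ _ _ _ _ _ _ _ := Finset.mem_univ _

end PathDecomp

lemma exists_width_eq_pathWidth {V : Type u} [Fintype V] (G : SimpleGraph V) :
    ∃ D : PathDecomp G, D.width = pathWidth G :=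
  Nat.sInf_mem (s := {w | ∃ D : PathDecomp G, D.width = w}) ⟨_, PathDecomp.single G, rfl⟩

lemma card_le_pathWidth_add_one_of_isMinor {V : Type u} [Fintype V] {G : SimpleGraph V}
    {ι : Type*} [Fintype ι] (h : IsMinor G (⊤ : SimpleGraph ι)) :
    Fintype.card ι ≤ pathWidth G + 1 := by
  obtain ⟨D, hD⟩ := exists_width_eq_pathWidth G
  exact hD ▸ D.card_le_width_add_one_of_isMinor h

section Bridges

variable {V : Type u} {G : SimpleGraph V}

lemma IsCompOf.subset_of_mem {S N₁ N₂ : Set V} (h₁ : IsCompOf G S N₁) (h₂ : IsCompOf G S N₂)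
    {a : V} (ha₁ : a ∈ N₁) (ha₂ : a ∈ N₂) : N₁ ⊆ N₂ := fun b hb =>
  (h₁.2.2.1.preconnected ⟨a, ha₁⟩ ⟨b, hb⟩).of_adj_closed (P := fun v : N₁ => (v : V) ∈ N₂)
    (fun v w hvw hv => h₂.2.2.2 v hv w (h₁.2.1 w.2) hvw) ha₂

lemma IsCompOf.bridgeFromComp_verts_diff_subset {S N : Set V} (h : IsCompOf G S N) :
    (bridgeFromComp G N).verts \ S ⊆ N := by
  rintro v ⟨⟨w, hvw, hv | hw⟩, hvS⟩
  exacts [hv, h.2.2.2 w hw v hvS hvw.symm]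

lemma IsCompOf.exists_adj_of_mem_bridgeFromComp_verts {S N : Set V} (h : IsCompOf G S N) {a : V}
    (ha : a ∈ (bridgeFromComp G N).verts) (haS : a ∈ S) : ∃ b ∈ N, G.Adj a b := by
  obtain ⟨b, hab, ha | hb⟩ := ha
  exacts [absurd haS (h.2.1 ha), ⟨b, hb, hab⟩]

lemma IsCompOf.subset_bridgeFromComp_verts {S N : Set V} (h : IsCompOf G S N) {a b : V} (hb : b ∈ N)
    (hab : G.Adj a b) : N ⊆ (bridgeFromComp G N).verts := by
  intro v hv
  obtain ⟨p⟩ := h.2.2.1.preconnected ⟨v, hv⟩ ⟨b, hb⟩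
  cases p with
  | nil => exact ⟨a, hab.symm, Or.inl hv⟩
  | cons hvw _ => exact ⟨_, hvw, Or.inl hv⟩

variable {x : V} {C : G.Walk x x}

lemma IsBridgeOf.disjoint_verts_diff {B₁ B₂ : G.Subgraph} (h₁ : IsBridgeOf G C B₁)
    (h₂ : IsBridgeOf G C B₂) (hne : B₁ ≠ B₂) :
    Disjoint (B₁.verts \ {v | v ∈ C.support}) (B₂.verts \ {v | v ∈ C.support}) := by
  have chord : ∀ {a b} (hab : G.Adj a b), a ∈ C.support → b ∈ C.support →
      (G.subgraphOfAdj hab).verts \ {v | v ∈ C.support} = ∅ := fun _ ha hb =>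
    sdiff_eq_empty.2 (insert_subset ha (singleton_subset_iff.2 hb))
  rcases h₁ with ⟨N₁, hN₁, rfl⟩ | ⟨a, b, hab, ha, hb, -, rfl⟩
  · rcases h₂ with ⟨N₂, hN₂, rfl⟩ | ⟨a, b, hab, ha, hb, -, rfl⟩
    · refine disjoint_left.2 fun v hv₁ hv₂ => hne ?_
      have h₁ := hN₁.bridgeFromComp_verts_diff_subset hv₁
      have h₂ := hN₂.bridgeFromComp_verts_diff_subset hv₂
      rw [(hN₁.subset_of_mem hN₂ h₁ h₂).antisymm (hN₂.subset_of_mem hN₁ h₂ h₁)]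
    · rw [chord hab ha hb]; exact disjoint_empty _
  · rw [chord hab ha hb]; exact empty_disjoint _

lemma IsBridgeOf.exists_linkedThrough {B : G.Subgraph} (hB : IsBridgeOf G C B) {a a' : V}
    (ha : a ∈ legs C B) (ha' : a' ∈ legs C B) (hne : a ≠ a') :
    ∃ I ⊆ B.verts \ {v | v ∈ C.support}, G.LinkedThrough I a a' := by
  rcases hB with ⟨N, hN, rfl⟩ | ⟨p, q, hpq, -, -, -, rfl⟩
  · obtain ⟨b, hb, hab⟩ := hN.exists_adj_of_mem_bridgeFromComp_verts ha.1 ha.2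
    obtain ⟨b', hb', hab'⟩ := hN.exists_adj_of_mem_bridgeFromComp_verts ha'.1 ha'.2
    exact ⟨N, fun v hv => ⟨hN.subset_bridgeFromComp_verts hb hab hv, hN.2.1 hv⟩,
      induce_insert_connected hN.2.2.1 hb hab, b', mem_insert_of_mem a hb', a', rfl, hab'.symm⟩
  · have haa' : G.Adj a a' := by
      rcases ha.1 with rfl | rfl <;> rcases ha'.1 with rfl | rfl
      exacts [absurd rfl hne, hpq, hpq.symm, absurd rfl hne]
    refine ⟨∅, empty_subset _, ?_, a, mem_insert a ∅, a', rfl, haa'⟩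
    rw [insert_empty_eq]
    exact induce_singleton_connected a

end Bridges

namespace SimpleGraph.Walk

variable {V : Type u} {G : SimpleGraph V} {x : V}

def getCycleVert (C : G.Walk x x) (m : ℕ) : V := C.getVert (m % C.length)

lemma getCycleVert_add_length (C : G.Walk x x) (m : ℕ) :
    C.getCycleVert (m + C.length) = C.getCycleVert m := by
  simp [getCycleVert]

lemma getCycleVert_of_le (C : G.Walk x x) {m : ℕ} (hm : m ≤ C.length) :
    C.getCycleVert m = C.getVert m := by
  rcases hm.lt_or_eq with hm | rfl
  · rw [getCycleVert, Nat.mod_eq_of_lt hm]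
  · simp [getCycleVert]

lemma adj_getCycleVert_succ (C : G.Walk x x) (hC : 0 < C.length) (m : ℕ) :
    G.Adj (C.getCycleVert m) (C.getCycleVert (m + 1)) := by
  have hm := Nat.mod_lt m hC
  have hsucc : C.getCycleVert (m + 1) = C.getVert (m % C.length + 1) := by
    rw [← getCycleVert_of_le C hm]
    simp only [getCycleVert, Nat.succ_eq_add_one, Nat.mod_add_mod]
  exact hsucc ▸ C.adj_getVert_succ hm

lemma getCycleVert_mem_support (C : G.Walk x x) (m : ℕ) : C.getCycleVert m ∈ C.support :=
  C.getVert_mem_support _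

lemma IsCycle.injOn_getCycleVert {C : G.Walk x x} (hC : C.IsCycle) (a : ℕ) :
    InjOn C.getCycleVert (Ico a (a + C.length)) := by
  intro m hm m' hm' h
  have := hC.three_le_length
  simp only [mem_Ico] at hm hm'
  have hmod : ∀ k, k % C.length ∈ {i | i ≤ C.length - 1} := fun k => by
    have := Nat.mod_lt k (by omega : 0 < C.length)
    show k % C.length ≤ C.length - 1
    omega
  exact Nat.ModEq.eq_of_abs_lt (hC.getVert_injOn' (hmod m) (hmod m') h)
    (abs_sub_lt_iff.2 ⟨by omega, by omega⟩)

lemma IsCycle.mem_support_tail {C : G.Walk x x} (hC : C.IsCycle) {v : V}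
    (hv : v ∈ C.support) : v ∈ C.support.tail := by
  rw [← cons_tail_support, List.mem_cons] at hv
  rcases hv with rfl | hv
  exacts [end_mem_tail_support hC.not_nil, hv]

lemma getCycleVert_idxOf_support_tail_add_one [DecidableEq V] (C : G.Walk x x) {v : V}
    (hv : v ∈ C.support.tail) : C.getCycleVert (C.support.tail.idxOf v + 1) = v := by
  have hlt := List.idxOf_lt_length_iff.2 hv
  have hlen : C.support.tail.length = C.length := by simp
  rw [getCycleVert_of_le C (by omega), getVert_eq_support_getElem C (by omega),
    ← List.getElem_tail, List.getElem_idxOf hlt]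
  exact hlt

end SimpleGraph.Walk

lemma posBetween_comm {V : Type u} [DecidableEq V] (L : List V) (a b z : V) :
    posBetween L a b z ↔ posBetween L b a z :=
  Or.comm

namespace SimpleGraph.Walk.IsCycle

variable {V : Type u} [DecidableEq V] {G : SimpleGraph V} {x : V} {C : G.Walk x x}

lemma isMinor_top_fin_four_of_interleaved_legs (hC : C.IsCycle) {B B' : G.Subgraph}
    (hB : IsBridgeOf G C B) (hB' : IsBridgeOf G C B') (hne : B ≠ B') {v₁ v₂ v₃ v₄ : V}
    (hv₁ : v₁ ∈ legs C B) (hv₂ : v₂ ∈ legs C B') (hv₃ : v₃ ∈ legs C B) (hv₄ : v₄ ∈ legs C B')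
    (h₁₂ : C.support.tail.idxOf v₁ < C.support.tail.idxOf v₂)
    (h₂₃ : C.support.tail.idxOf v₂ < C.support.tail.idxOf v₃)
    (h₃₄ : C.support.tail.idxOf v₃ < C.support.tail.idxOf v₄) :
    IsMinor G (⊤ : SimpleGraph (Fin 4)) := by
  set L := C.support.tail
  have hpos : ∀ {v B}, v ∈ legs C B → C.getCycleVert (L.idxOf v + 1) = v := fun hv =>
    C.getCycleVert_idxOf_support_tail_add_one (hC.mem_support_tail hv.2)
  have h₄ : L.idxOf v₄ < C.length := by
    simpa [L] using List.idxOf_lt_length_iff.2 (hC.mem_support_tail hv₄.2)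
  obtain ⟨I, hI, hIl⟩ := hB.exists_linkedThrough hv₁ hv₃ (by rintro rfl; omega)
  obtain ⟨J, hJ, hJl⟩ := hB'.exists_linkedThrough hv₂ hv₄ (by rintro rfl; omega)
  have off_cycle : ∀ (K : Set V) (s : Set ℕ), K ⊆ {v | v ∈ C.support}ᶜ →
      Disjoint K (C.getCycleVert '' s) := by
    intro K s hK
    refine Set.disjoint_left.2 ?_
    rintro _ hv ⟨m, -, rfl⟩
    exact hK hv (C.getCycleVert_mem_support m)
  rw [← hpos hv₁, ← hpos hv₃] at hIl
  rw [← hpos hv₂, ← hpos hv₄] at hJl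
  have hlen := hC.three_le_length
  exact isMinor_top_fin_four_of_linkedThrough (C.adj_getCycleVert_succ (by omega))
    (j₅ := L.idxOf v₁ + 1 + C.length) (by omega) (by omega) (by omega) (by omega)
    (hC.injOn_getCycleVert _) (C.getCycleVert_add_length _)
    (off_cycle _ _ (hI.trans (sdiff_subset_compl _ _)))
    (off_cycle _ _ (hJ.trans (sdiff_subset_compl _ _)))
    ((hB.disjoint_verts_diff hB' hne).mono hI hJ) hIl hJl

lemma isMinor_top_fin_four_of_posBetween (hC : C.IsCycle) {B B' : G.Subgraph}
    (hB : IsBridgeOf G C B) (hB' : IsBridgeOf G C B') (hne : B ≠ B') {a a' b b' : V}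
    (ha : a ∈ legs C B) (ha' : a' ∈ legs C B) (hb : b ∈ legs C B') (hb' : b' ∈ legs C B')
    (hab' : a ≠ b') (ha'b' : a' ≠ b')
    (hin : posBetween C.support.tail a a' b) (hout : ¬ posBetween C.support.tail a a' b') :
    IsMinor G (⊤ : SimpleGraph (Fin 4)) := by
  wlog hlt : C.support.tail.idxOf a < C.support.tail.idxOf a' generalizing a a'
  · refine this ha' ha ha'b' hab' ((posBetween_comm ..).1 hin) (mt (posBetween_comm ..).2 hout) ?_
    rcases hin with h | h <;> omega
  have idx_ne : ∀ {v B}, v ∈ legs C B → v ≠ b' →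
      C.support.tail.idxOf v ≠ C.support.tail.idxOf b' :=
    fun hv h => mt (List.idxOf_inj (hC.mem_support_tail hv.2)).1 h
  have h₁ := idx_ne ha hab'
  have h₂ := idx_ne ha' ha'b'
  unfold posBetween at hin hout
  replace hin : C.support.tail.idxOf a < C.support.tail.idxOf b ∧
      C.support.tail.idxOf b < C.support.tail.idxOf a' := by omega
  rcases lt_or_gt_of_ne h₁ with h | h
  · exact hC.isMinor_top_fin_four_of_interleaved_legs hB hB' hne ha hb ha' hb' hin.1 hin.2
      (by omega)
  · exact hC.isMinor_top_fin_four_of_interleaved_legs hB' hB hne.symm hb' ha hb ha' (by omega)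
      hin.1 hin.2

lemma isMinor_top_fin_four_of_bridgesCross (hC : C.IsCycle) {B₁ B₂ : G.Subgraph}
    (hB₁ : IsBridgeOf G C B₁) (hB₂ : IsBridgeOf G C B₂) (hne : B₁ ≠ B₂)
    (h : BridgesCross C B₁ B₂) : IsMinor G (⊤ : SimpleGraph (Fin 4)) := by
  obtain ⟨a₁, ha₁, a₂, ha₂, b₁, hb₁, b₂, hb₂, -, -, h₁₁, h₁₂, h₂₁, h₂₂, hin | hin⟩ := h
  · exact hC.isMinor_top_fin_four_of_posBetween hB₁ hB₂ hne ha₁ ha₂ hb₁ hb₂ h₁₂ h₂₂ hin.1 hin.2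
  · exact hC.isMinor_top_fin_four_of_posBetween hB₁ hB₂ hne ha₁ ha₂ hb₂ hb₁ h₁₁ h₂₁ hin.1 hin.2

end SimpleGraph.Walk.IsCycle

theorem bridges_not_crossing_general {V : Type u} [Fintype V] [DecidableEq V] (G : SimpleGraph V)
    (hpw : pathWidth G ≤ 2) {x : V} (C : G.Walk x x)
    (hC : IsLongestCycle G C) (B₁ B₂ : G.Subgraph)
    (hB₁ : IsBridgeOf G C B₁) (hB₂ : IsBridgeOf G C B₂) (hne : B₁ ≠ B₂) :
    ¬ BridgesCross C B₁ B₂ := fun hcross => by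
  have h := card_le_pathWidth_add_one_of_isMinor
    (hC.1.isMinor_top_fin_four_of_bridgesCross hB₁ hB₂ hne hcross)
  rw [Fintype.card_fin] at h
  omega

/-- Let `G` be a 2-connected finite simple graph with path-width at most 2 and
let `C` be a longest cycle of `G`. Then no two bridges of `C` cross. -/
theorem bridges_not_crossing {V : Type u} [Fintype V] [DecidableEq V] (G : SimpleGraph V)
    (h2 : TwoConnected G) (hpw : pathWidth G ≤ 2) {x : V} (C : G.Walk x x)
    (hC : IsLongestCycle G C) (B₁ B₂ : G.Subgraph)
    (hB₁ : IsBridgeOf G C B₁) (hB₂ : IsBridgeOf G C B₂) (hne : B₁ ≠ B₂) :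
    ¬ BridgesCross C B₁ B₂ :=
  bridges_not_crossing_general G hpw C hC B₁ B₂ hB₁ hB₂ hne
end

section
/- Every partial track has path-width at most 2. -/
open SimpleGraph

universe u v

/-!
Sweep a monotone staircase through the grid of index pairs `(i, j)`, from `(1, 1)` to `(k, ℓ)`,
raising `i` or `j` by one at each step; since the chords pairwise do not cross they form a chain
in the product order, so the staircase can be chosen to pass through all of them. At a position
`(i, j)` keep the bag `{pᵢ, q_j, x}`, where `x` is the vertex about to be reached, and before it
one bag `{pᵢ, q_j, m}` for each long chord with middle vertex `m` attached at `(i, j)`. All bags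
have at most three vertices, every path edge and chord lies in one of them, and since both
coordinates only increase along the sweep, each vertex occupies a contiguous run of bags.
Restricting the bags of a track to a subgraph gives the result for partial tracks.
-/

theorem Set.Subsingleton.ordConnected {α : Type*} [PartialOrder α] {s : Set α}
    (hs : s.Subsingleton) : s.OrdConnected :=
  ⟨fun _ ha _ hb _ hc => by
    obtain rfl := hs ha hb
    exact le_antisymm hc.2 hc.1 ▸ ha⟩

theorem Set.ordConnected_setOf_mem_Icc {ι β : Type*} [Preorder ι] [Preorder β] {f g : ι → β}
    (hf : Monotone f) (hg : Monotone g) (x : β) : {i | x ∈ Set.Icc (f i) (g i)}.OrdConnected :=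
  ⟨fun _ ha _ hb _ hc => ⟨(hf hc.2).trans hb.1, ha.2.trans (hg hc.1)⟩⟩

namespace PathDecomp

variable {V : Type u} {G : SimpleGraph V}

section OfLinearOrder

variable {ι : Type*} [Finite ι] [LinearOrder ι] (bag : ι → Finset V)
  (mem_bag : ∀ v, ∃ i, v ∈ bag i)
  (edge_bag : ∀ ⦃u w : V⦄, G.Adj u w → ∃ i, u ∈ bag i ∧ w ∈ bag i)
  (ordConnected : ∀ v, {i | v ∈ bag i}.OrdConnected)

noncomputable def ofLinearOrder : PathDecomp G :=
  letI := Fintype.ofFinite ι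
  let e := Fintype.orderIsoFinOfCardEq ι rfl
  { n := Fintype.card ι
    bag := fun t => bag (e t)
    mem_bag := fun v => (mem_bag v).elim fun i hi => ⟨e.symm i, by simpa using hi⟩
    edge_bag := fun _ _ h => (edge_bag h).elim fun i hi => ⟨e.symm i, by simpa using hi⟩
    interp := fun _ _ _ hab hbc v ha hc =>
      (ordConnected v).out ha hc ⟨e.monotone hab, e.monotone hbc⟩ }

theorem width_ofLinearOrder_le {w : ℕ} (h : ∀ i, (bag i).card ≤ w + 1) :
    (ofLinearOrder bag mem_bag edge_bag ordConnected).width ≤ w :=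
  Nat.sub_le_of_le_add (Finset.sup_le fun _ _ => h _)

end OfLinearOrder

variable {X : Type v} {H : SimpleGraph X}

noncomputable def comap (D : PathDecomp H) (f : G →g H) (hf : Function.Injective f) :
    PathDecomp G where
  n := D.n
  bag i := (D.bag i).preimage f hf.injOn
  mem_bag v := (D.mem_bag (f v)).elim fun i hi => ⟨i, by simpa using hi⟩
  edge_bag _ _ h := (D.edge_bag (f.map_adj h)).elim fun i hi => ⟨i, by simpa using hi⟩
  interp i j k hij hjk v := by simpa using D.interp i j k hij hjk (f v)

theorem width_comap_le (D : PathDecomp H) (f : G →g H) (hf : Function.Injective f) :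
    (D.comap f hf).width ≤ D.width := by
  refine Nat.sub_le_sub_right (Finset.sup_mono_fun fun i _ => ?_) 1
  exact Finset.card_le_card_of_injOn f (fun _ hv => by simpa [comap] using hv) hf.injOn

end PathDecomp

theorem pathWidth_le_width {V : Type u} {G : SimpleGraph V} (D : PathDecomp G) :
    pathWidth G ≤ D.width :=
  Nat.sInf_le ⟨D, rfl⟩

namespace TrackRep

/-- A position `(col, row)` of the sweep together with a slot: `slot = ⊤` is the bag that steps
to the next position, a finite `slot` is the bag of the middle vertex it enumerates. -/
@[ext]
structure Stage (α : Type*) where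
  col : ℕ
  row : ℕ
  slot : WithTop α

namespace Stage

variable {α : Type*} [LinearOrder α]

instance : LinearOrder (Stage α) :=
  LinearOrder.lift' (fun σ => toLex (σ.col, toLex (σ.row, σ.slot))) fun σ τ h => by
    simp only [toLex_inj, Prod.mk.injEq] at h
    exact Stage.ext h.1 h.2.1 h.2.2

theorem le_iff {σ τ : Stage α} : σ ≤ τ ↔
    σ.col < τ.col ∨ σ.col = τ.col ∧ (σ.row < τ.row ∨ σ.row = τ.row ∧ σ.slot ≤ τ.slot) := by
  change toLex (σ.col, toLex (σ.row, σ.slot)) ≤ toLex (τ.col, toLex (τ.row, τ.slot)) ↔ _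
  simp only [Prod.Lex.toLex_le_toLex]

theorem monotone_col : Monotone (col : Stage α → ℕ) := fun _ _ h => by
  rcases le_iff.mp h with h | ⟨h, -⟩ <;> omega

end Stage

variable {W : Type u} {H : SimpleGraph W}

theorem finite (T : TrackRep H) : Finite W := by
  refine Set.finite_univ_iff.mp <|
    ((Set.finite_range T.p).union (Set.finite_range T.q)).union T.M_fin |>.subset fun x _ => ?_
  rcases T.vert_cover x with ⟨i, rfl⟩ | ⟨j, rfl⟩ | hx <;> simp [*]

noncomputable def enum (T : TrackRep H) : W ≃ Fin (Nat.card W) :=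
  haveI := T.finite
  Finite.equivFin W

variable (T : TrackRep H)

def chords : Set (Fin T.k × Fin T.l) := T.short ∪ T.ends '' T.M

theorem snd_le_snd_of_mem_chords {c c' : Fin T.k × Fin T.l} (hc : c ∈ T.chords)
    (hc' : c' ∈ T.chords) (h : (c.1 : ℕ) < c'.1) : (c.2 : ℕ) ≤ c'.2 := by
  have := T.noncross c hc c' hc'
  by_contra! h'
  nlinarith

open Classical in
/-- In column `a` the staircase climbs from row `lo a` to row `hi a`, the highest row joined by
a chord to one of `p₀, …, p_a`. -/
noncomputable def hi (a : ℕ) : ℕ :=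
  (Finset.univ.filter fun c : Fin T.k × Fin T.l => c ∈ T.chords ∧ (c.1 : ℕ) ≤ a).sup
    fun c => (c.2 : ℕ)

open Classical in
noncomputable def lo (a : ℕ) : ℕ :=
  (Finset.univ.filter fun c : Fin T.k × Fin T.l => c ∈ T.chords ∧ (c.1 : ℕ) < a).sup
    fun c => (c.2 : ℕ)

theorem lo_le_hi (a : ℕ) : T.lo a ≤ T.hi a :=
  Finset.sup_mono fun c hc => by
    simp only [Finset.mem_filter, Finset.mem_univ, true_and] at hc ⊢
    exact ⟨hc.1, by omega⟩

theorem hi_le_lo {a b : ℕ} (h : a < b) : T.hi a ≤ T.lo b :=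
  Finset.sup_mono fun c hc => by
    simp only [Finset.mem_filter, Finset.mem_univ, true_and] at hc ⊢
    exact ⟨hc.1, by omega⟩

theorem lo_zero : T.lo 0 = 0 := by
  simp [lo]

theorem lo_succ (a : ℕ) : T.lo (a + 1) = T.hi a := by
  unfold lo hi
  congr 1
  ext
  simp

theorem hi_lt (a : ℕ) : T.hi a < T.l :=
  (Finset.sup_lt_iff T.lpos).2 fun c _ => c.2.isLt

theorem lo_le_of_mem_chords {c : Fin T.k × Fin T.l} (hc : c ∈ T.chords) : T.lo c.1 ≤ c.2 :=
  Finset.sup_le fun c' hc' => by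
    simp only [Finset.mem_filter, Finset.mem_univ, true_and] at hc'
    exact T.snd_le_snd_of_mem_chords hc'.1 hc hc'.2

theorem le_hi_of_mem_chords {c : Fin T.k × Fin T.l} (hc : c ∈ T.chords) :
    (c.2 : ℕ) ≤ T.hi c.1 :=
  Finset.le_sup (f := fun c : Fin T.k × Fin T.l => (c.2 : ℕ)) (by simpa using hc)

theorem exists_le_hi {y : ℕ} (hy : y < T.l) :
    ∃ a < T.k, y ≤ T.hi a ∧ (T.lo a < y ∨ T.lo a = 0) := by
  have hlast : y ≤ T.hi (T.k - 1) := by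
    have := T.le_hi_of_mem_chords T.last_chord
    dsimp only at this
    omega
  have hex : ∃ a, y ≤ T.hi a := ⟨_, hlast⟩
  refine ⟨Nat.find hex, ?_, Nat.find_spec hex, ?_⟩
  · have := Nat.find_min' hex hlast
    have := T.kpos
    omega
  · rcases Nat.eq_zero_or_eq_succ_pred (Nat.find hex) with h | h
    · exact Or.inr (h ▸ T.lo_zero)
    · have := Nat.find_min hex (Nat.pred_lt_self (by omega))
      rw [h, T.lo_succ]
      omega

/-- `p` extended to all of `ℕ` by clamping: `pNat a = pNat (k - 1)` for `a ≥ k`, so that the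
last step of the sweep adds no new vertex. -/
def pNat (a : ℕ) : W := T.p ⟨min a (T.k - 1), by have := T.kpos; omega⟩

def qNat (b : ℕ) : W := T.q ⟨min b (T.l - 1), by have := T.lpos; omega⟩

@[simp]
theorem pNat_coe (i : Fin T.k) : T.pNat i = T.p i := by
  simp only [pNat]
  congr
  omega

@[simp]
theorem qNat_coe (j : Fin T.l) : T.qNat j = T.q j := by
  simp only [qNat]
  congr
  omega

theorem pNat_eq_pNat_iff {a b : ℕ} : T.pNat a = T.pNat b ↔ min a (T.k - 1) = min b (T.k - 1) := by
  simp [pNat, T.p_inj.eq_iff]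

theorem qNat_eq_qNat_iff {a b : ℕ} : T.qNat a = T.qNat b ↔ min a (T.l - 1) = min b (T.l - 1) := by
  simp [qNat, T.q_inj.eq_iff]

theorem pNat_ne_qNat (a b : ℕ) : T.pNat a ≠ T.qNat b := T.p_ne_q _ _

theorem pNat_ne_of_mem_M {m : W} (hm : m ∈ T.M) (a : ℕ) : T.pNat a ≠ m := (T.M_ne_p hm _).symm

theorem qNat_ne_of_mem_M {m : W} (hm : m ∈ T.M) (b : ℕ) : T.qNat b ≠ m := (T.M_ne_q hm _).symm

structure IsStage (σ : Stage (Fin (Nat.card W))) : Prop where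
  col_lt : σ.col < T.k
  lo_le_row : T.lo σ.col ≤ σ.row
  row_le_hi : σ.row ≤ T.hi σ.col
  mid_of_slot_eq : ∀ m, σ.slot = T.enum m →
    m ∈ T.M ∧ ((T.ends m).1 : ℕ) = σ.col ∧ ((T.ends m).2 : ℕ) = σ.row

abbrev Stages : Type := {σ : Stage (Fin (Nat.card W)) // T.IsStage σ}

instance : Finite T.Stages :=
  Finite.of_injective (β := Fin T.k × Fin T.l × WithTop (Fin (Nat.card W)))
    (fun σ => (⟨σ.1.col, σ.2.col_lt⟩, ⟨σ.1.row, σ.2.row_le_hi.trans_lt (T.hi_lt _)⟩, σ.1.slot))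
    fun σ τ h => by
      simp only [Prod.mk.injEq, Fin.mk.injEq] at h
      exact Subtype.ext (Stage.ext h.1 h.2.1 h.2.2)

section Bags

variable {σ : Stage (Fin (Nat.card W))}

noncomputable def third (σ : Stage (Fin (Nat.card W))) : W :=
  σ.slot.recTopCoe (if σ.row < T.hi σ.col then T.qNat (σ.row + 1) else T.pNat (σ.col + 1))
    T.enum.symm

open Classical in
noncomputable def bag (σ : Stage (Fin (Nat.card W))) : Finset W :=
  {T.pNat σ.col, T.qNat σ.row, T.third σ}

noncomputable def colMax (σ : Stage (Fin (Nat.card W))) : ℕ :=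
  if σ.slot = ⊤ ∧ T.hi σ.col ≤ σ.row then σ.col + 1 else σ.col

noncomputable def rowMax (σ : Stage (Fin (Nat.card W))) : ℕ :=
  if σ.slot = ⊤ ∧ σ.row < T.hi σ.col then σ.row + 1 else σ.row

theorem mem_M_of_slot_eq (hσ : T.IsStage σ) {i : Fin (Nat.card W)} (hi : σ.slot = i) :
    T.enum.symm i ∈ T.M :=
  (hσ.mid_of_slot_eq _ (by simp [hi])).1

theorem pNat_mem_bag_iff (hσ : T.IsStage σ) {x : ℕ} (hx : x < T.k) :
    T.pNat x ∈ T.bag σ ↔ x ∈ Set.Icc σ.col (T.colMax σ) := by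
  have := hσ.col_lt
  rcases eq_or_ne σ.slot ⊤ with hs | hs
  · simp only [bag, third, hs, WithTop.recTopCoe_top, colMax, Set.mem_Icc, true_and]
    split_ifs <;> simp only [Finset.mem_insert, Finset.mem_singleton, pNat_eq_pNat_iff,
      pNat_ne_qNat, or_false, false_or] <;> omega
  · obtain ⟨i, hi⟩ := WithTop.ne_top_iff_exists.mp hs
    simp only [bag, third, ← hi, WithTop.recTopCoe_coe, colMax, WithTop.coe_ne_top, false_and,
      if_false, Finset.mem_insert, Finset.mem_singleton, pNat_eq_pNat_iff, pNat_ne_qNat,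
      T.pNat_ne_of_mem_M (T.mem_M_of_slot_eq hσ hi.symm), Set.mem_Icc, or_false]
    omega

theorem qNat_mem_bag_iff (hσ : T.IsStage σ) {y : ℕ} (hy : y < T.l) :
    T.qNat y ∈ T.bag σ ↔ y ∈ Set.Icc σ.row (T.rowMax σ) := by
  have := T.hi_lt σ.col
  have := hσ.row_le_hi
  rcases eq_or_ne σ.slot ⊤ with hs | hs
  · simp only [bag, third, hs, WithTop.recTopCoe_top, rowMax, Set.mem_Icc, true_and]
    split_ifs <;> simp only [Finset.mem_insert, Finset.mem_singleton, qNat_eq_qNat_iff,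
      (T.pNat_ne_qNat _ _).symm, or_false, false_or] <;> omega
  · obtain ⟨i, hi⟩ := WithTop.ne_top_iff_exists.mp hs
    simp only [bag, third, ← hi, WithTop.recTopCoe_coe, rowMax, WithTop.coe_ne_top, false_and,
      if_false, Finset.mem_insert, Finset.mem_singleton, qNat_eq_qNat_iff,
      (T.pNat_ne_qNat _ _).symm, T.qNat_ne_of_mem_M (T.mem_M_of_slot_eq hσ hi.symm),
      Set.mem_Icc, or_false, false_or]
    omega

theorem mem_bag_iff_of_mem_M {m : W} (hm : m ∈ T.M) : m ∈ T.bag σ ↔ σ.slot = T.enum m := by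
  rcases eq_or_ne σ.slot ⊤ with hs | hs
  · simp only [bag, third, hs, WithTop.recTopCoe_top]
    split_ifs <;> simp [(T.pNat_ne_of_mem_M hm _).symm, (T.qNat_ne_of_mem_M hm _).symm]
  · obtain ⟨i, hi⟩ := WithTop.ne_top_iff_exists.mp hs
    simp [bag, third, ← hi, (T.pNat_ne_of_mem_M hm _).symm, (T.qNat_ne_of_mem_M hm _).symm,
      Equiv.eq_symm_apply, eq_comm]

end Bags

theorem monotone_col : Monotone fun σ : T.Stages => σ.1.col :=
  Stage.monotone_col.comp (Subtype.mono_coe _)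

theorem monotone_row : Monotone fun σ : T.Stages => σ.1.row := by
  rintro ⟨⟨a, b, s⟩, hσ⟩ ⟨⟨a', b', s'⟩, hτ⟩ h
  rcases Stage.le_iff.mp h with hc | ⟨-, hr | ⟨hr, -⟩⟩
  · exact hσ.row_le_hi.trans ((T.hi_le_lo hc).trans hτ.lo_le_row)
  · exact hr.le
  · exact hr.le

theorem monotone_colMax : Monotone fun σ : T.Stages => T.colMax σ.1 := by
  rintro ⟨⟨a, b, s⟩, hσ⟩ ⟨⟨a', b', s'⟩, hτ⟩ h
  have := hσ.row_le_hi
  have := hτ.row_le_hi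
  dsimp only [colMax] at *
  rw [Subtype.mk_le_mk, Stage.le_iff] at h
  dsimp only at h
  rcases h with hc | ⟨rfl, hr | ⟨rfl, hs⟩⟩
  · split_ifs <;> omega
  · split_ifs <;> omega
  · split_ifs with h₁ h₂ <;> try omega
    exact absurd ⟨top_le_iff.mp (h₁.1 ▸ hs), h₁.2⟩ h₂

theorem monotone_rowMax : Monotone fun σ : T.Stages => T.rowMax σ.1 := by
  rintro ⟨⟨a, b, s⟩, hσ⟩ ⟨⟨a', b', s'⟩, hτ⟩ h
  have := hσ.row_le_hi
  have := hτ.lo_le_row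
  dsimp only [rowMax] at *
  rw [Subtype.mk_le_mk, Stage.le_iff] at h
  dsimp only at h
  rcases h with hc | ⟨rfl, hr | ⟨rfl, hs⟩⟩
  · have := T.hi_le_lo hc
    split_ifs <;> omega
  · split_ifs <;> omega
  · split_ifs with h₁ h₂ <;> try omega
    exact absurd ⟨top_le_iff.mp (h₁.1 ▸ hs), h₁.2⟩ h₂

def stageTop {a b : ℕ} (ha : a < T.k) (hlo : T.lo a ≤ b) (hhi : b ≤ T.hi a) : T.Stages :=
  ⟨⟨a, b, ⊤⟩, ha, hlo, hhi, fun _ h => absurd h.symm WithTop.coe_ne_top⟩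

noncomputable def stageMid {m : W} (hm : m ∈ T.M) : T.Stages :=
  ⟨⟨(T.ends m).1, (T.ends m).2, T.enum m⟩, (T.ends m).1.isLt,
    T.lo_le_of_mem_chords (Or.inr ⟨m, hm, rfl⟩), T.le_hi_of_mem_chords (Or.inr ⟨m, hm, rfl⟩),
    fun _ h => by
      obtain rfl := T.enum.injective (WithTop.coe_injective h)
      exact ⟨hm, rfl, rfl⟩⟩

theorem exists_mem_bag (v : W) : ∃ σ : T.Stages, v ∈ T.bag σ.1 := by
  rcases T.vert_cover v with ⟨i, rfl⟩ | ⟨j, rfl⟩ | hm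
  · exact ⟨T.stageTop i.isLt le_rfl (T.lo_le_hi i), by simp [stageTop, bag]⟩
  · obtain ⟨a, ha, hj, hlo⟩ := T.exists_le_hi j.isLt
    exact ⟨T.stageTop ha (by omega) hj, by simp [stageTop, bag]⟩
  · exact ⟨T.stageMid hm, by simp [stageMid, bag, third]⟩

theorem exists_adj_mem_bag {u w : W} (h : H.Adj u w) :
    ∃ σ : T.Stages, u ∈ T.bag σ.1 ∧ w ∈ T.bag σ.1 := by
  rcases (T.adj_iff u w).mp h with ⟨i, j, hij, rfl, rfl⟩ | ⟨i, j, hij, rfl, rfl⟩ |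
    ⟨c, hc, hcw⟩ | ⟨m, hm, hmw⟩
  · let σ := T.stageTop ((min_le_left (i : ℕ) j).trans_lt i.isLt) (T.lo_le_hi _) le_rfl
    refine ⟨σ, ?_, ?_⟩ <;>
    · rw [← pNat_coe, T.pNat_mem_bag_iff σ.2 (Fin.isLt _)]
      simp only [σ, stageTop, colMax, Set.mem_Icc, le_refl, and_self, ite_true]
      omega
  · obtain ⟨a, ha, hy, hlo⟩ := T.exists_le_hi (max_lt i.isLt j.isLt)
    let σ := T.stageTop (b := min i j) ha (by omega) (by omega)
    refine ⟨σ, ?_, ?_⟩ <;>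
    · rw [← qNat_coe, T.qNat_mem_bag_iff σ.2 (Fin.isLt _)]
      simp only [σ, stageTop, rowMax, Set.mem_Icc, true_and]
      split_ifs <;> omega
  · refine ⟨T.stageTop c.1.isLt (T.lo_le_of_mem_chords (Or.inl hc))
      (T.le_hi_of_mem_chords (Or.inl hc)), ?_⟩
    rcases hcw with ⟨rfl, rfl⟩ | ⟨rfl, rfl⟩ <;> simp [stageTop, bag]
  · refine ⟨T.stageMid hm, ?_⟩
    rcases hmw with ⟨rfl, rfl | rfl⟩ | ⟨rfl, rfl | rfl⟩ <;> simp [stageMid, bag, third]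

theorem ordConnected_setOf_mem_bag (v : W) : {σ : T.Stages | v ∈ T.bag σ.1}.OrdConnected := by
  rcases T.vert_cover v with ⟨i, rfl⟩ | ⟨j, rfl⟩ | hm
  · convert Set.ordConnected_setOf_mem_Icc T.monotone_col T.monotone_colMax (i : ℕ) using 1
    ext σ
    rw [Set.mem_ofPred_eq, ← pNat_coe, T.pNat_mem_bag_iff σ.2 i.isLt]
    rfl
  · convert Set.ordConnected_setOf_mem_Icc T.monotone_row T.monotone_rowMax (j : ℕ) using 1
    ext σ
    rw [Set.mem_ofPred_eq, ← qNat_coe, T.qNat_mem_bag_iff σ.2 j.isLt]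
    rfl
  · refine Set.Subsingleton.ordConnected fun σ hσ τ hτ => ?_
    rw [Set.mem_ofPred_eq, T.mem_bag_iff_of_mem_M hm] at hσ hτ
    obtain ⟨-, hσc, hσr⟩ := σ.2.mid_of_slot_eq _ hσ
    obtain ⟨-, hτc, hτr⟩ := τ.2.mid_of_slot_eq _ hτ
    exact Subtype.ext (Stage.ext (hσc.symm.trans hτc) (hσr.symm.trans hτr) (hσ.trans hτ.symm))

noncomputable def pathDecomp : PathDecomp H :=
  PathDecomp.ofLinearOrder (fun σ : T.Stages => T.bag σ.1) T.exists_mem_bag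
    (fun _ _ => T.exists_adj_mem_bag) T.ordConnected_setOf_mem_bag

theorem width_pathDecomp_le : T.pathDecomp.width ≤ 2 :=
  PathDecomp.width_ofLinearOrder_le _ _ _ _ fun _ => by classical exact Finset.card_le_three

end TrackRep

theorem pathWidth_le_two_of_isPartialTrack_general {V : Type u} (G : SimpleGraph V)
    (h : IsPartialTrack G) : pathWidth G ≤ 2 := by
  obtain ⟨W, H, f, ⟨T⟩, hf, hadj⟩ := h
  calc pathWidth G ≤ (T.pathDecomp.comap ⟨f, fun h => hadj h⟩ hf).width := pathWidth_le_width _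
    _ ≤ T.pathDecomp.width := PathDecomp.width_comap_le _ _ _
    _ ≤ 2 := T.width_pathDecomp_le

/-- Every partial track has path-width at most 2. -/
theorem pathWidth_le_two_of_isPartialTrack {V : Type u} [Fintype V] (G : SimpleGraph V)
    (h : IsPartialTrack G) : pathWidth G ≤ 2 :=
  pathWidth_le_two_of_isPartialTrack_general G h
end
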